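/- arXiv:2111.10298 — 6 statements merged into one kernel-verified Lean document; each statement's English description precedes it below -/
import Mathlib

section
/- Let f : ℝ^d → ℝ satisfy the standing assumptions, with κ₂ a Lipschitz constant for ∇f. Let t > 0 and x ∈ L_t = {y : f(y) = t} with ∇f(x) ≠ 0. Then every point y with ‖y − x‖ < ‖∇f(x)‖/(4κ₂) has a unique metric projection onto L_t; that is, the local reach of L_t at x is at least ‖∇f(x)‖/(4κ₂). -/
open Metric Set Filter Topology MeasureTheory InnerProductSpace

noncomputable section
set_option maxHeartbeats 1000000

variable {d : ℕ}

/-- Standing assumptions on the density `f`: twice continuously differentiable with bounded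
values, gradient and Hessian; vanishing at infinity; Morse (non-degenerate critical points). -/
def StandingAssumptions (f : EuclideanSpace ℝ (Fin d) → ℝ) : Prop :=
  ContDiff ℝ 2 f ∧
  (∃ M, ∀ x, |f x| ≤ M) ∧
  (∃ M, ∀ x, ‖gradient f x‖ ≤ M) ∧
  (∃ M, ∀ x, ‖fderiv ℝ (gradient f) x‖ ≤ M) ∧
  Tendsto f (cocompact (EuclideanSpace ℝ (Fin d))) (nhds 0) ∧
  (∀ x, gradient f x = 0 → Function.Bijective (fderiv ℝ (gradient f) x))

/-- Orthogonality of metric projection: if `p` minimizes the squared distance to `y`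
on the level set `{f = t}` and `∇f p ≠ 0`, then `y - p` is a multiple of `∇f p`. -/
lemma proj_orth (f : EuclideanSpace ℝ (Fin d) → ℝ) (hf2 : ContDiff ℝ 2 f) (t : ℝ)
    (y p : EuclideanSpace ℝ (Fin d))
    (hp : f p = t) (hgp : gradient f p ≠ 0)
    (hmin : ∀ z, f z = t → ‖p - y‖ ^ 2 ≤ ‖z - y‖ ^ 2) :
    ∃ μ : ℝ, y - p = μ • gradient f p := by
  have hdiff : Differentiable ℝ f := hf2.differentiable (by norm_num)
  have hsf : HasStrictFDerivAt f (toDual ℝ (EuclideanSpace ℝ (Fin d)) (gradient f p)) p := by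
    have h := hf2.hasStrictFDerivAt (x := p) (by norm_num)
    have heq : fderiv ℝ f p = toDual ℝ (EuclideanSpace ℝ (Fin d)) (gradient f p) :=
      ((hdiff p).hasGradientAt.hasFDerivAt).fderiv
    rwa [heq] at h
  set φ : EuclideanSpace ℝ (Fin d) → ℝ := fun z => ⟪z - y, z - y⟫_ℝ with hφ
  have hsφ : HasStrictFDerivAt φ
      ((fderivInnerCLM ℝ (p - y, p - y)).comp
        ((ContinuousLinearMap.id ℝ _).prod (ContinuousLinearMap.id ℝ _))) p := by
    have h1 : HasStrictFDerivAt (fun z : EuclideanSpace ℝ (Fin d) => z - y)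
        (ContinuousLinearMap.id ℝ _) p := (hasStrictFDerivAt_id p).sub_const y
    exact h1.inner ℝ h1
  have hextr : IsLocalExtrOn φ {z | f z = f p} p := by
    have hm : IsMinOn φ {z | f z = f p} p := by
      intro z hz
      have h := hmin z (by rw [← hp]; exact hz)
      simp only [φ, real_inner_self_eq_norm_sq]
      simpa using h
    exact hm.localize.isExtr
  obtain ⟨a, b, hab0, hab⟩ := hextr.exists_multipliers_of_hasStrictFDerivAt_1d hsf hsφ
  have hev : ∀ v, a * ⟪gradient f p, v⟫_ℝ + b * (2 * ⟪p - y, v⟫_ℝ) = 0 := by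
    intro v
    have h := ContinuousLinearMap.ext_iff.1 hab v
    have h2 : a * ⟪gradient f p, v⟫_ℝ + b * (⟪p - y, v⟫_ℝ + ⟪v, p - y⟫_ℝ) = 0 := by
      simp only [ContinuousLinearMap.add_apply, ContinuousLinearMap.smul_apply,
        ContinuousLinearMap.comp_apply, ContinuousLinearMap.prod_apply,
        ContinuousLinearMap.coe_id', id_eq, fderivInnerCLM_apply, toDual_apply_apply,
        ContinuousLinearMap.zero_apply, smul_eq_mul] at h
      exact h
    clear h; have h := h2
    have hc : (⟪v, p - y⟫_ℝ) = ⟪p - y, v⟫_ℝ := real_inner_comm (p - y) v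
    linear_combination h - b * hc
  have hb : b ≠ 0 := by
    intro hb
    apply hgp
    have ha : a ≠ 0 := by
      intro ha; apply hab0; simp [ha, hb, Prod.ext_iff]
    have h := hev (gradient f p)
    rw [hb] at h
    simp only [zero_mul, add_zero] at h
    have h2 : ⟪gradient f p, gradient f p⟫_ℝ = 0 := by
      rcases mul_eq_zero.1 h with h | h
      · exact absurd h ha
      · exact h
    exact inner_self_eq_zero.1 h2
  have hb2 : (2 : ℝ) * b ≠ 0 := by simp [hb]
  refine ⟨a / (2 * b), ?_⟩
  set w : EuclideanSpace ℝ (Fin d) := a • gradient f p + (2 * b) • (p - y) with hw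
  have hw0 : w = 0 := by
    rw [← inner_self_eq_zero (𝕜 := ℝ) (x := w)]
    have h := hev w
    rw [hw, inner_add_left, real_inner_smul_left, real_inner_smul_left]
    linarith
  have hvec : a • gradient f p = (2 * b) • (y - p) := by
    have : a • gradient f p + (2 * b) • (p - y) = 0 := hw0
    have h2 : (2 * b) • (y - p) = - ((2 * b) • (p - y)) := by
      rw [← smul_neg]; congr 1; abel
    rw [h2, eq_neg_iff_add_eq_zero]
    exact this
  have : (a / (2 * b)) • gradient f p = y - p := by
    rw [div_eq_inv_mul, ← smul_smul, hvec, inv_smul_smul₀ hb2]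
  exact this.symm

/-- local reach bound for level sets: every point within distance
`‖∇f(x)‖/(4κ₂)` of `x ∈ L_t` has a unique metric projection onto `L_t`. -/
theorem levelSet_local_reach (f : EuclideanSpace ℝ (Fin d) → ℝ) (hf : StandingAssumptions f)
    (κ₂ : ℝ) (hκ₂ : ∀ x y, ‖gradient f y - gradient f x‖ ≤ κ₂ * ‖y - x‖)
    (t : ℝ) (ht : 0 < t) (x : EuclideanSpace ℝ (Fin d)) (hx : f x = t)
    (hgx : gradient f x ≠ 0) :
    ∀ y : EuclideanSpace ℝ (Fin d), dist y x < ‖gradient f x‖ / (4 * κ₂) →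
      ∃! p, p ∈ {z | f z = t} ∧ dist y p = infDist y {z | f z = t} := by
  intro y hy
  have hdist0 : (0:ℝ) ≤ dist y x := dist_nonneg
  have hκpos : 0 < κ₂ := by
    by_contra h
    push_neg at h
    have h4 : 4 * κ₂ ≤ 0 := by linarith
    have hle : ‖gradient f x‖ / (4 * κ₂) ≤ 0 :=
      div_nonpos_iff.2 (Or.inl ⟨norm_nonneg _, h4⟩)
    linarith
  have hdiff : Differentiable ℝ f := hf.1.differentiable (by norm_num)
  set S : Set (EuclideanSpace ℝ (Fin d)) := {z | f z = t} with hSdef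
  have hxS : x ∈ S := hx
  have hclosed : IsClosed S := isClosed_eq (hf.1.continuous) continuous_const
  obtain ⟨p, hpS, hpd⟩ := hclosed.exists_infDist_eq_dist ⟨x, hxS⟩ y
  set G := ‖gradient f x‖ with hGdef
  have hGpos : 0 < G := norm_pos_iff.2 hgx
  set ρ := infDist y S with hρdef
  have hρ0 : 0 ≤ ρ := infDist_nonneg
  have hρr : ρ < G / (4 * κ₂) := lt_of_le_of_lt (infDist_le_dist_of_mem hxS) hy
  have hρG : ρ * (4 * κ₂) < G := (lt_div_iff₀ (by positivity)).1 hρr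
  refine ⟨p, ⟨hpS, hpd.symm⟩, ?_⟩
  intro q hq
  obtain ⟨hqS, hqd⟩ := hq
  -- norms of y - p and y - q
  have hyp : ‖y - p‖ = ρ := by rw [← dist_eq_norm, ← hpd]
  have hyq : ‖y - q‖ = ρ := by rw [← dist_eq_norm, hqd]
  -- gradient at p is large
  have hpx : ‖p - x‖ < 2 * (G / (4 * κ₂)) := by
    have h1 : ‖p - x‖ ≤ ‖p - y‖ + ‖y - x‖ := norm_sub_le_norm_sub_add_norm_sub p y x
    have h2 : ‖p - y‖ = ρ := by rw [norm_sub_rev]; exact hyp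
    have h3 : ‖y - x‖ = dist y x := (dist_eq_norm y x).symm
    rw [h2, h3] at h1
    linarith
  have hgp2 : G / 2 ≤ ‖gradient f p‖ := by
    have h1 : ‖gradient f p - gradient f x‖ ≤ κ₂ * ‖p - x‖ := hκ₂ x p
    have h2 : κ₂ * ‖p - x‖ < κ₂ * (2 * (G / (4 * κ₂))) :=
      mul_lt_mul_of_pos_left hpx hκpos
    have h3 : κ₂ * (2 * (G / (4 * κ₂))) = G / 2 := by field_simp; ring
    have h4 : ‖gradient f x‖ - ‖gradient f p‖ ≤ ‖gradient f p - gradient f x‖ := by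
      rw [norm_sub_rev]; exact norm_sub_norm_le _ _
    rw [← hGdef] at h4
    linarith
  have hgp : gradient f p ≠ 0 := by
    intro h0
    rw [h0, norm_zero] at hgp2
    linarith
  -- orthogonality: y - p = μ • ∇f p
  obtain ⟨μ, hμ⟩ := proj_orth f hf.1 t y p hpS hgp (by
    intro z hz
    have h1 : dist y p ≤ dist y z := by rw [← hpd]; exact infDist_le_dist_of_mem hz
    have h2 : ‖p - y‖ ≤ ‖z - y‖ := by
      rw [norm_sub_rev p y, norm_sub_rev z y, ← dist_eq_norm, ← dist_eq_norm]; exact h1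
    exact pow_le_pow_left₀ (norm_nonneg _) h2 2)
  have hμρ : |μ| * ‖gradient f p‖ = ρ := by
    have h := hyp
    rw [hμ, norm_smul, Real.norm_eq_abs] at h
    exact h
  -- Taylor estimate along the segment from p to q
  have htoDual : ∀ z, fderiv ℝ f z = toDual ℝ (EuclideanSpace ℝ (Fin d)) (gradient f z) :=
    fun z => ((hdiff z).hasGradientAt.hasFDerivAt).fderiv
  have taylor : ‖f q - f p - (toDual ℝ (EuclideanSpace ℝ (Fin d)) (gradient f p)) (q - p)‖
      ≤ (κ₂ * ‖q - p‖) * ‖q - p‖ := by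
    have hseg : ∀ z ∈ segment ℝ p q, ‖z - p‖ ≤ ‖q - p‖ := by
      intro z hz
      obtain ⟨a, b, ha, hb, hab, rfl⟩ := hz
      have ha1 : a = 1 - b := by linarith
      subst ha1
      have h1 : (1 - b) • p + b • q - p = b • (q - p) := by module
      rw [h1, norm_smul, Real.norm_eq_abs, abs_of_nonneg hb]
      nlinarith [norm_nonneg (q - p)]
    refine (convex_segment p q).norm_image_sub_le_of_norm_fderiv_le'
      (fun z _ => hdiff z) ?_ (left_mem_segment ℝ p q) (right_mem_segment ℝ p q)
    intro z hz
    rw [htoDual z, ← map_sub, LinearIsometryEquiv.norm_map]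
    calc ‖gradient f z - gradient f p‖ ≤ κ₂ * ‖z - p‖ := hκ₂ p z
      _ ≤ κ₂ * ‖q - p‖ := mul_le_mul_of_nonneg_left (hseg z hz) hκpos.le
  have hfq : f q = t := hqS
  have hfp : f p = t := hpS
  have hI : |⟪gradient f p, q - p⟫_ℝ| ≤ κ₂ * ‖q - p‖ ^ 2 := by
    have h2 := taylor
    rw [hfq, hfp, sub_self, zero_sub, norm_neg, toDual_apply_apply, Real.norm_eq_abs] at h2
    calc |⟪gradient f p, q - p⟫_ℝ| ≤ (κ₂ * ‖q - p‖) * ‖q - p‖ := h2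
      _ = κ₂ * ‖q - p‖ ^ 2 := by ring
  have hexp : ρ ^ 2 = ρ ^ 2 - 2 * ⟪y - p, q - p⟫_ℝ + ‖q - p‖ ^ 2 := by
    have h := norm_sub_sq_real (y - p) (q - p)
    have h2 : (y - p) - (q - p) = y - q := by abel
    rw [h2, hyq, hyp] at h
    exact h
  have hinner : ⟪y - p, q - p⟫_ℝ = μ * ⟪gradient f p, q - p⟫_ℝ := by
    rw [hμ, real_inner_smul_left]
  have hD : ‖q - p‖ ^ 2 = 2 * (μ * ⟪gradient f p, q - p⟫_ℝ) := by
    rw [← hinner]; linarith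
  have habs : μ * ⟪gradient f p, q - p⟫_ℝ ≤ |μ| * (κ₂ * ‖q - p‖ ^ 2) := by
    calc μ * ⟪gradient f p, q - p⟫_ℝ ≤ |μ * ⟪gradient f p, q - p⟫_ℝ| := le_abs_self _
      _ = |μ| * |⟪gradient f p, q - p⟫_ℝ| := abs_mul _ _
      _ ≤ |μ| * (κ₂ * ‖q - p‖ ^ 2) := mul_le_mul_of_nonneg_left hI (abs_nonneg μ)
  have step1 : ‖q - p‖ ^ 2 ≤ 2 * |μ| * κ₂ * ‖q - p‖ ^ 2 := by linarith
  have step2 : ‖gradient f p‖ * ‖q - p‖ ^ 2 ≤ 2 * κ₂ * ρ * ‖q - p‖ ^ 2 := by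
    nlinarith [mul_le_mul_of_nonneg_right step1 (norm_nonneg (gradient f p)), hμρ,
      mul_nonneg hκpos.le (sq_nonneg ‖q - p‖)]
  have hD2 : ‖q - p‖ ^ 2 ≤ 0 := by
    nlinarith [step2, hgp2, hρG, sq_nonneg ‖q - p‖]
  have hD0 : ‖q - p‖ = 0 := by
    have := sq_nonneg ‖q - p‖
    have h0 : ‖q - p‖ ^ 2 = 0 := le_antisymm hD2 this
    exact pow_eq_zero_iff (by norm_num) |>.1 h0
  have : q - p = 0 := norm_eq_zero.1 hD0
  exact sub_eq_zero.1 this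
end
end

section
/- Let f : ℝ^d → ℝ satisfy the standing assumptions, with κ₂ a Lipschitz constant for ∇f. Take x with ∇f(x) ≠ 0 and set t = f(x). If η > 0 satisfies η ≤ ‖∇f(x)‖²/(2κ₂), then the distance from x to the level set L_{t+η} = {y : f(y) = t + η} satisfies dist(x, L_{t+η}) ≤ 2η/‖∇f(x)‖ (in particular L_{t+η} is nonempty). -/
open Metric Set Filter Topology MeasureTheory

noncomputable section

variable {d : ℕ}

/-- if `η ≤ ‖∇f(x)‖²/(2κ₂)` then the level set at level `f x + η` is nonempty and
within distance `2η/‖∇f(x)‖` of `x`. -/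
theorem dist_to_higher_levelSet (f : EuclideanSpace ℝ (Fin d) → ℝ)
    (hf : StandingAssumptions f)
    (κ₂ : ℝ) (hκ₂ : ∀ x y, ‖gradient f y - gradient f x‖ ≤ κ₂ * ‖y - x‖)
    (x : EuclideanSpace ℝ (Fin d)) (hgx : gradient f x ≠ 0)
    (η : ℝ) (hη : 0 < η) (hη' : η ≤ ‖gradient f x‖ ^ 2 / (2 * κ₂)) :
    {y | f y = f x + η}.Nonempty ∧
    infDist x {y | f y = f x + η} ≤ 2 * η / ‖gradient f x‖ := by
  set G := gradient f x with hG
  set n : ℝ := ‖G‖ with hn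
  have hnpos : 0 < n := norm_pos_iff.2 hgx
  have hκpos : 0 < κ₂ := by
    by_contra h
    push_neg at h
    have : n ^ 2 / (2 * κ₂) ≤ 0 :=
      div_nonpos_of_nonneg_of_nonpos (sq_nonneg _) (by linarith)
    linarith
  have hdf : Differentiable ℝ f := hf.1.differentiable (by norm_num)
  set v : EuclideanSpace ℝ (Fin d) := n⁻¹ • G with hv
  have hvnorm : ‖v‖ = 1 := by
    rw [hv, norm_smul, norm_inv, norm_norm]
    field_simp
  set r : ℝ := 2 * η / n with hr
  have hrpos : 0 < r := by positivity
  -- the curve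
  set φ : ℝ → EuclideanSpace ℝ (Fin d) := fun s => x + s • v with hφ
  have hφd : ∀ s : ℝ, HasDerivAt φ v s := by
    intro s
    have := (hasDerivAt_const s x).add ((hasDerivAt_id s).smul_const v)
    simp only [zero_add, one_smul] at this
    exact this
  have hgrad : ∀ y w : EuclideanSpace ℝ (Fin d),
      (inner ℝ (gradient f y) w : ℝ) = fderiv ℝ f y w := by
    intro y w; rw [gradient]; exact InnerProductSpace.toDual_symm_apply
  have hfφ : ∀ s : ℝ, HasDerivAt (fun s => f (φ s))
      (inner ℝ (gradient f (φ s)) v : ℝ) s := by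
    intro s
    rw [hgrad]
    exact (hdf.differentiableAt.hasFDerivAt).comp_hasDerivAt s (hφd s)
  -- lower bound on the derivative for s ≥ 0
  have hder_lb : ∀ s : ℝ, 0 ≤ s → n - κ₂ * s ≤ (inner ℝ (gradient f (φ s)) v : ℝ) := by
    intro s hs
    have h1 : (inner ℝ G v : ℝ) = n := by
      rw [hv, real_inner_smul_right, real_inner_self_eq_norm_sq]
      field_simp [hn]
      ring
    have h2 : |(inner ℝ (gradient f (φ s)) v : ℝ) - inner ℝ G v| ≤ κ₂ * s := by
      rw [← inner_sub_left]
      calc |(inner ℝ (gradient f (φ s) - G) v : ℝ)| ≤ ‖gradient f (φ s) - G‖ * ‖v‖ :=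
            abs_real_inner_le_norm _ _
        _ ≤ κ₂ * ‖φ s - x‖ * 1 := by
            rw [hvnorm]
            exact mul_le_mul_of_nonneg_right (hκ₂ x (φ s)) zero_le_one
        _ = κ₂ * s := by
            simp only [hφ, add_sub_cancel_left, norm_smul, hvnorm]
            rw [Real.norm_eq_abs, abs_of_nonneg hs]; ring
    have := abs_le.1 h2
    linarith [this.1, h1 ▸ this.1]
  -- auxiliary function
  set ψ : ℝ → ℝ := fun s => f (φ s) - (n * s - κ₂ * s ^ 2 / 2) with hψ
  have hψd : ∀ s : ℝ, HasDerivAt ψ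
      ((inner ℝ (gradient f (φ s)) v : ℝ) - (n - κ₂ * s)) s := by
    intro s
    have h1 : HasDerivAt (fun s : ℝ => n * s - κ₂ * s ^ 2 / 2) (n - κ₂ * s) s := by
      have := ((hasDerivAt_id s).const_mul n).sub
        (((hasDerivAt_pow 2 s).const_mul κ₂).div_const 2)
      exact this.congr_deriv (by ring)
    exact (hfφ s).sub h1
  have hmono : MonotoneOn ψ (Icc 0 r) := by
    apply monotoneOn_of_deriv_nonneg (convex_Icc 0 r)
    · exact (continuous_iff_continuousAt.2 fun s => (hψd s).continuousAt).continuousOn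
    · exact fun s _ => ((hψd s).differentiableAt).differentiableWithinAt
    · intro s hs
      rw [interior_Icc] at hs
      rw [(hψd s).deriv]
      have := hder_lb s hs.1.le
      linarith
  have key : f x + η ≤ f (φ r) := by
    have h0 : ψ 0 = f x := by simp [hψ, hφ]
    have hrr : ψ 0 ≤ ψ r := hmono (left_mem_Icc.2 hrpos.le) (right_mem_Icc.2 hrpos.le) hrpos.le
    have hquad : n * r - κ₂ * r ^ 2 / 2 ≥ η := by
      have h1 : n * r = 2 * η := by rw [hr]; field_simp
      have h2 : κ₂ * r ^ 2 / 2 ≤ η := by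
        have hle : η * (2 * κ₂) ≤ n ^ 2 := (le_div_iff₀ (by positivity)).1 hη'
        have heq : κ₂ * r ^ 2 / 2 = 2 * κ₂ * η ^ 2 / n ^ 2 := by
          rw [hr]; field_simp
        rw [heq, div_le_iff₀ (by positivity)]
        nlinarith [hle, hη.le, sq_nonneg η]
      linarith
    have heq : ψ r = f (φ r) - (n * r - κ₂ * r ^ 2 / 2) := rfl
    rw [h0, heq] at hrr
    linarith
  -- IVT
  have hcont : ContinuousOn (fun s => f (φ s)) (Icc 0 r) :=
    (continuous_iff_continuousAt.2 fun s => (hfφ s).continuousAt).continuousOn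
  have hmem : f x + η ∈ Icc (f (φ 0)) (f (φ r)) := by
    constructor
    · simp [hφ]; linarith
    · exact key
  obtain ⟨s, hs, hfs⟩ := intermediate_value_Icc hrpos.le hcont hmem
  refine ⟨⟨φ s, hfs⟩, ?_⟩
  calc infDist x {y | f y = f x + η} ≤ dist x (φ s) := infDist_le_dist_of_mem hfs
    _ = ‖s • v‖ := by rw [dist_eq_norm, hφ]; simp [norm_sub_rev]
    _ = s := by rw [norm_smul, hvnorm, Real.norm_eq_abs, abs_of_nonneg hs.1]; ring
    _ ≤ r := hs.2
end
end

section
/- Let f : ℝ^d → ℝ satisfy the standing assumptions, with κ₂ a Lipschitz constant for ∇f. Take x with ∇f(x) ≠ 0 and set t = f(x). If η > 0 satisfies η ≤ ‖∇f(x)‖²/(16κ₂), then x has a unique metric projection onto the level set L_{t+η} = {y : f(y) = t + η}, and this projection P_{t+η}(x) satisfies ‖P_{t+η}(x) − x‖ ≤ 2η/‖∇f(x)‖. -/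
open Metric Set Filter Topology MeasureTheory RealInnerProductSpace

noncomputable section

variable {d : ℕ}

/-- `p` is a metric projection of `y` onto the set `A`. -/
def IsProjOn (A : Set (EuclideanSpace ℝ (Fin d))) (y p : EuclideanSpace ℝ (Fin d)) : Prop :=
  p ∈ A ∧ dist y p = infDist y A



lemma weak_taylor {f : EuclideanSpace ℝ (Fin d) → ℝ} (hd : Differentiable ℝ f)
    {κ : ℝ} (hκ0 : 0 ≤ κ)
    (hκ : ∀ x y, ‖gradient f y - gradient f x‖ ≤ κ * ‖y - x‖)
    (a b : EuclideanSpace ℝ (Fin d)) :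
    abs (f b - f a - ⟪gradient f a, b - a⟫) ≤ κ * ‖b - a‖ ^ 2 := by
  set g := gradient f a with hg
  have hφ : (innerSL ℝ g : EuclideanSpace ℝ (Fin d) →L[ℝ] ℝ) (b - a) = ⟪g, b - a⟫ := rfl
  have hconv : Convex ℝ (closedBall a ‖b - a‖) := convex_closedBall _ _
  have key := hconv.norm_image_sub_le_of_norm_hasFDerivWithin_le'
    (f := f) (f' := fderiv ℝ f) (φ := innerSL ℝ g) (C := κ * ‖b - a‖) (x := a) (y := b)
    (fun y _ => (hd y).hasFDerivAt.hasFDerivWithinAt)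
    (fun y hy => by
      have e1 : fderiv ℝ f y
          = InnerProductSpace.toDual ℝ (EuclideanSpace ℝ (Fin d)) (gradient f y) := by
        rw [gradient, LinearIsometryEquiv.apply_symm_apply]
      have e2 : (innerSL ℝ g : EuclideanSpace ℝ (Fin d) →L[ℝ] ℝ)
          = InnerProductSpace.toDual ℝ (EuclideanSpace ℝ (Fin d)) g := by
        ext z; simp [InnerProductSpace.toDual_apply_apply]
      rw [e1, e2, ← map_sub, (InnerProductSpace.toDual ℝ _).norm_map]
      have hya : ‖y - a‖ ≤ ‖b - a‖ := by
        simpa [dist_eq_norm] using mem_closedBall.mp hy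
      calc ‖gradient f y - g‖ ≤ κ * ‖y - a‖ := hκ a y
        _ ≤ κ * ‖b - a‖ := mul_le_mul_of_nonneg_left hya hκ0)
    (mem_closedBall_self (norm_nonneg _))
    (by simp [mem_closedBall, dist_eq_norm])
  rw [hφ] at key
  calc abs (f b - f a - ⟪g, b - a⟫) ≤ κ * ‖b - a‖ * ‖b - a‖ := key
    _ = κ * ‖b - a‖ ^ 2 := by ring

lemma exists_on_segment {f : EuclideanSpace ℝ (Fin d) → ℝ} (hc : Continuous f)
    (z z' : EuclideanSpace ℝ (Fin d)) {c : ℝ} (hmem : c ∈ uIcc (f z) (f z')) :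
    ∃ y, f y = c ∧ ‖y - z‖ ≤ ‖z' - z‖ := by
  have hφ : Continuous fun t : ℝ => f (z + t • (z' - z)) :=
    hc.comp (continuous_const.add (continuous_id.smul continuous_const))
  have h0 : f (z + (0:ℝ) • (z' - z)) = f z := by simp
  have h1 : f (z + (1:ℝ) • (z' - z)) = f z' := by simp
  obtain ⟨s, hs, hfs⟩ := intermediate_value_uIcc (a := (0:ℝ)) (b := 1)
    (f := fun t : ℝ => f (z + t • (z' - z))) hφ.continuousOn (by simpa [h0, h1] using hmem)
  refine ⟨z + s • (z' - z), hfs, ?_⟩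
  have hs' : s ∈ Icc (0:ℝ) 1 := by rwa [uIcc_of_le zero_le_one] at hs
  have : ‖z + s • (z' - z) - z‖ = |s| * ‖z' - z‖ := by
    rw [add_sub_cancel_left, norm_smul, Real.norm_eq_abs]
  rw [this]
  calc |s| * ‖z' - z‖ ≤ 1 * ‖z' - z‖ := by
        apply mul_le_mul_of_nonneg_right _ (norm_nonneg _)
        rw [abs_of_nonneg hs'.1]; exact hs'.2
    _ = ‖z' - z‖ := one_mul _

set_option maxHeartbeats 1000000 in
/-- if `η ≤ ‖∇f(x)‖²/(16κ₂)` then `x` has a unique metric projection onto the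
level set at level `f x + η`, and this projection is within distance `2η/‖∇f(x)‖` of `x`. -/
theorem proj_to_higher_levelSet (f : EuclideanSpace ℝ (Fin d) → ℝ)
    (hf : StandingAssumptions f)
    (κ₂ : ℝ) (hκ₂ : ∀ x y, ‖gradient f y - gradient f x‖ ≤ κ₂ * ‖y - x‖)
    (x : EuclideanSpace ℝ (Fin d)) (hgx : gradient f x ≠ 0)
    (η : ℝ) (hη : 0 < η) (hη' : η ≤ ‖gradient f x‖ ^ 2 / (16 * κ₂)) :
    (∃! p, IsProjOn {y | f y = f x + η} x p) ∧
    ∀ p, IsProjOn {y | f y = f x + η} x p → dist p x ≤ 2 * η / ‖gradient f x‖ := by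
  classical
  set G := ‖gradient f x‖ with hGdef
  have hG : 0 < G := norm_pos_iff.mpr hgx
  have hκpos : 0 < κ₂ := by
    by_contra hcon
    push_neg at hcon
    rcases hcon.lt_or_eq with hlt | heq
    · have : G ^ 2 / (16 * κ₂) < 0 :=
        div_neg_of_pos_of_neg (by positivity) (by linarith)
      linarith
    · rw [heq] at hη'; simp at hη'; linarith
  have hκ0 : 0 ≤ κ₂ := hκpos.le
  have hdiff : Differentiable ℝ f := hf.1.differentiable (by norm_num)
  have hcont : Continuous f := hdiff.continuous
  have taylor := weak_taylor hdiff hκ0 hκ₂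
  set A : Set (EuclideanSpace ℝ (Fin d)) := {y | f y = f x + η} with hA
  have hAclosed : IsClosed A := isClosed_eq hcont continuous_const
  set r : ℝ := 2 * η / G with hrdef
  have hr : 0 < r := by positivity
  have h16 : η * (16 * κ₂) ≤ G ^ 2 := (le_div_iff₀ (by positivity)).mp hη'
  have hκr : κ₂ * r ≤ G / 8 := by
    rw [hrdef]
    rw [mul_div_assoc', div_le_div_iff₀ hG (by norm_num : (0:ℝ) < 8)]
    calc κ₂ * (2 * η) * 8 = η * (16 * κ₂) := by ring
      _ ≤ G ^ 2 := h16
      _ = G * G := sq G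
  -- existence of a point on the level set within distance r
  set z' : EuclideanSpace ℝ (Fin d) := x + (r / G) • gradient f x with hz'
  have hz'x : z' - x = (r / G) • gradient f x := by rw [hz']; abel
  have hnormz' : ‖z' - x‖ = r := by
    rw [hz'x, norm_smul, Real.norm_eq_abs, abs_of_nonneg (by positivity : (0:ℝ) ≤ r / G),
      ← hGdef, div_mul_cancel₀ _ hG.ne']
  have hinner : ⟪gradient f x, z' - x⟫ = 2 * η := by
    rw [hz'x, real_inner_smul_right, real_inner_self_eq_norm_sq, ← hGdef]
    field_simp [hrdef]
    rw [hrdef, div_mul_cancel₀ _ hG.ne']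
  have hfz' : f x + η ≤ f z' := by
    have h1 := taylor x z'
    rw [hinner, hnormz'] at h1
    have habs := abs_le.mp h1
    have hb : κ₂ * r ^ 2 ≤ η / 4 := by
      have : κ₂ * r ^ 2 = (κ₂ * r) * r := by ring
      rw [this]
      calc (κ₂ * r) * r ≤ (G / 8) * r := mul_le_mul_of_nonneg_right hκr hr.le
        _ = η / 4 := by rw [hrdef]; field_simp; ring
    linarith [habs.1]
  obtain ⟨y₀, hy₀, hy₀d⟩ := exists_on_segment hcont x z'
    (mem_uIcc.mpr (Or.inl ⟨by linarith, hfz'⟩))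
  have hy₀A : y₀ ∈ A := hy₀
  have hAne : A.Nonempty := ⟨y₀, hy₀A⟩
  set D : ℝ := infDist x A with hDdef
  have hinfle : D ≤ r := by
    calc D ≤ dist x y₀ := infDist_le_dist_of_mem hy₀A
      _ = ‖y₀ - x‖ := by rw [dist_eq_norm, norm_sub_rev]
      _ ≤ ‖z' - x‖ := hy₀d
      _ = r := hnormz'
  obtain ⟨p₀, hp₀mem, hp₀dist⟩ := hAclosed.exists_infDist_eq_dist hAne x
  have hD0 : 0 < D := by
    rw [hDdef]
    refine (hAclosed.notMem_iff_infDist_pos hAne).mp ?_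
    intro hxa
    have : f x = f x + η := hxa
    linarith
  have hκD : κ₂ * D ≤ G / 8 :=
    le_trans (mul_le_mul_of_nonneg_left hinfle hκ0) hκr
  have hbound : ∀ p, IsProjOn A x p → dist p x ≤ 2 * η / G := by
    intro p hp
    rw [dist_comm, hp.2]
    exact hinfle
  refine ⟨⟨p₀, ⟨hp₀mem, hp₀dist.symm⟩, ?_⟩, hbound⟩
  -- uniqueness
  have huniq : ∀ p₁ p₂, IsProjOn A x p₁ → IsProjOn A x p₂ → p₁ = p₂ := by
    intro p₁ p₂ hp1 hp2
    by_contra hne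
    set m : EuclideanSpace ℝ (Fin d) := (2:ℝ)⁻¹ • (p₁ + p₂) with hm
    set δ : ℝ := ‖p₁ - p₂‖ with hδ
    have hδ0 : 0 < δ := by
      rw [hδ]; exact norm_pos_iff.mpr (sub_ne_zero.mpr hne)
    have hxp1 : ‖x - p₁‖ = D := by rw [← dist_eq_norm]; exact hp1.2
    have hxp2 : ‖x - p₂‖ = D := by rw [← dist_eq_norm]; exact hp2.2
    have hδ2D : δ ≤ 2 * D := by
      have hsplit : p₁ - p₂ = -(x - p₁) + (x - p₂) := by abel
      calc δ = ‖-(x - p₁) + (x - p₂)‖ := by rw [hδ, ← hsplit]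
        _ ≤ ‖-(x - p₁)‖ + ‖x - p₂‖ := norm_add_le _ _
        _ = D + D := by rw [norm_neg, hxp1, hxp2]
        _ = 2 * D := by ring
    have hxmidsum : x - m = (2:ℝ)⁻¹ • ((x - p₁) + (x - p₂)) := by
      rw [hm, smul_add, smul_add]; module
    have hxm : ‖x - m‖ ^ 2 = D ^ 2 - δ ^ 2 / 4 := by
      have hpar := parallelogram_law_with_norm ℝ (x - p₁) (x - p₂)
      have hab : (x - p₁) - (x - p₂) = -(p₁ - p₂) := by abel
      rw [hab, norm_neg, ← hδ, hxp1, hxp2] at hpar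
      rw [hxmidsum, norm_smul, Real.norm_eq_abs]
      rw [mul_pow, sq_abs]
      linear_combination hpar / 4
    have hxmD : ‖x - m‖ ≤ D := by
      have h1 : ‖x - m‖ ^ 2 ≤ D ^ 2 := by rw [hxm]; linarith [sq_nonneg δ]
      calc ‖x - m‖ = Real.sqrt (‖x - m‖ ^ 2) := (Real.sqrt_sq (norm_nonneg _)).symm
        _ ≤ Real.sqrt (D ^ 2) := Real.sqrt_le_sqrt h1
        _ = D := Real.sqrt_sq hD0.le
    have hmp1 : ‖p₁ - m‖ = δ / 2 := by
      have h1 : p₁ - m = (2:ℝ)⁻¹ • (p₁ - p₂) := by rw [hm]; module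
      rw [h1, norm_smul, Real.norm_eq_abs,
        show |(2:ℝ)⁻¹| = 2⁻¹ from abs_of_pos (by norm_num), ← hδ]
      ring
    have hmp2 : ‖p₂ - m‖ = δ / 2 := by
      have h1 : p₂ - m = (2:ℝ)⁻¹ • (p₂ - p₁) := by rw [hm]; module
      rw [h1, norm_smul, Real.norm_eq_abs,
        show |(2:ℝ)⁻¹| = 2⁻¹ from abs_of_pos (by norm_num), norm_sub_rev, ← hδ]
      ring
    have hfp1 : f p₁ = f x + η := hp1.1
    have hfp2 : f p₂ = f x + η := hp2.1
    set ε : ℝ := f m - (f x + η) with hε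
    have hε_bound : |ε| ≤ κ₂ * δ ^ 2 / 4 := by
      have h1 := taylor m p₁
      have h2 := taylor m p₂
      rw [hmp1] at h1
      rw [hmp2] at h2
      have hsum : (p₁ - m) + (p₂ - m) = 0 := by rw [hm]; module
      have hinner0 : ⟪gradient f m, p₁ - m⟫ + ⟪gradient f m, p₂ - m⟫ = 0 := by
        rw [← inner_add_right, hsum, inner_zero_right]
      have hkey : |(-2) * ε| ≤ 2 * (κ₂ * (δ / 2) ^ 2) := by
        have heq : (-2) * ε = (f p₁ - f m - ⟪gradient f m, p₁ - m⟫)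
            + (f p₂ - f m - ⟪gradient f m, p₂ - m⟫) := by
          rw [hfp1, hfp2, hε]; linarith [hinner0]
        rw [heq]
        exact (abs_add_le _ _).trans (by linarith [h1, h2])
      rw [abs_mul, abs_neg, abs_two] at hkey
      have : κ₂ * (δ / 2) ^ 2 = κ₂ * δ ^ 2 / 4 := by ring
      rw [this] at hkey
      linarith
    have hgm : G - G / 8 ≤ ‖gradient f m‖ := by
      have hlip := hκ₂ x m
      have h2 : κ₂ * ‖m - x‖ ≤ G / 8 := by
        have : ‖m - x‖ ≤ D := by rw [norm_sub_rev]; exact hxmD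
        exact le_trans (mul_le_mul_of_nonneg_left this hκ0) hκD
      have h3 : G ≤ ‖gradient f m‖ + ‖gradient f m - gradient f x‖ := by
        calc G = ‖gradient f x‖ := hGdef
          _ = ‖gradient f m - (gradient f m - gradient f x)‖ := by rw [sub_sub_cancel]
          _ ≤ ‖gradient f m‖ + ‖gradient f m - gradient f x‖ := norm_sub_le _ _
      linarith
    set ρ : ℝ := 2 * |ε| / G with hρ
    have hρ0 : 0 ≤ ρ := by positivity
    have hρle : ρ ≤ κ₂ * δ ^ 2 / (2 * G) := by
      rw [hρ]
      have h1 : 2 * |ε| / G ≤ 2 * (κ₂ * δ ^ 2 / 4) / G := by gcongr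
      have h2 : 2 * (κ₂ * δ ^ 2 / 4) / G = κ₂ * δ ^ 2 / (2 * G) := by
        field_simp
        ring
      linarith
    have hδD : δ ^ 2 ≤ 4 * D ^ 2 := by
      calc δ ^ 2 ≤ (2 * D) ^ 2 := pow_le_pow_left₀ hδ0.le hδ2D 2
        _ = 4 * D ^ 2 := by ring
    have hκρ : κ₂ * ρ ≤ G / 32 := by
      have h1 : κ₂ * ρ ≤ κ₂ * (κ₂ * δ ^ 2 / (2 * G)) := mul_le_mul_of_nonneg_left hρle hκ0
      have h2 : κ₂ * (κ₂ * δ ^ 2 / (2 * G)) ≤ G / 32 := by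
        have he : κ₂ * (κ₂ * δ ^ 2 / (2 * G)) = (κ₂ ^ 2 * δ ^ 2) / (2 * G) := by ring
        rw [he, div_le_div_iff₀ (by positivity) (by norm_num : (0:ℝ) < 32)]
        have hsq : κ₂ ^ 2 * D ^ 2 ≤ (G / 8) ^ 2 := by
          calc κ₂ ^ 2 * D ^ 2 = (κ₂ * D) ^ 2 := by ring
            _ ≤ (G / 8) ^ 2 := pow_le_pow_left₀ (mul_nonneg hκ0 hD0.le) hκD 2
        have ha : κ₂ ^ 2 * δ ^ 2 ≤ κ₂ ^ 2 * (4 * D ^ 2) :=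
          mul_le_mul_of_nonneg_left hδD (sq_nonneg κ₂)
        linarith [ha, hsq]
      linarith
    have hρG : ρ * (G / 2) = |ε| := by rw [hρ]; field_simp
    have hgmlow : G / 2 ≤ ‖gradient f m‖ - κ₂ * ρ := by linarith [hgm, hκρ]
    obtain ⟨y, hymem, hydist⟩ : ∃ y, f y = f x + η ∧ ‖y - m‖ ≤ ρ := by
      rcases le_or_gt ε 0 with hcase | hcase
      · set w : EuclideanSpace ℝ (Fin d) :=
          m + (ρ / ‖gradient f m‖) • gradient f m with hw
        have hgmpos : 0 < ‖gradient f m‖ := by linarith [hgm, hG]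
        have hwm : w - m = (ρ / ‖gradient f m‖) • gradient f m := by rw [hw]; abel
        have hnw : ‖w - m‖ = ρ := by
          rw [hwm, norm_smul, Real.norm_eq_abs,
            abs_of_nonneg (by positivity : (0:ℝ) ≤ ρ / ‖gradient f m‖),
            div_mul_cancel₀ _ hgmpos.ne']
        have hinw : ⟪gradient f m, w - m⟫ = ρ * ‖gradient f m‖ := by
          rw [hwm, real_inner_smul_right, real_inner_self_eq_norm_sq]
          field_simp
        have hfw : f x + η ≤ f w := by
          have h1 := taylor m w
          rw [hinw, hnw] at h1
          have habs := (abs_le.mp h1).1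
          have h2 : ρ * ‖gradient f m‖ - κ₂ * ρ ^ 2 ≥ |ε| := by
            have : ρ * ‖gradient f m‖ - κ₂ * ρ ^ 2 = ρ * (‖gradient f m‖ - κ₂ * ρ) := by ring
            rw [this, ← hρG]
            exact mul_le_mul_of_nonneg_left hgmlow hρ0
          have hεabs : |ε| = -ε := abs_of_nonpos hcase
          linarith [habs, h2, hεabs, hε]
        obtain ⟨y, hy1, hy2⟩ := exists_on_segment hcont m w
          (mem_uIcc.mpr (Or.inl ⟨by linarith [hε, hcase], hfw⟩))
        exact ⟨y, hy1, hy2.trans (le_of_eq hnw)⟩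
      · set w : EuclideanSpace ℝ (Fin d) :=
          m - (ρ / ‖gradient f m‖) • gradient f m with hw
        have hgmpos : 0 < ‖gradient f m‖ := by linarith [hgm, hG]
        have hwm : w - m = -((ρ / ‖gradient f m‖) • gradient f m) := by rw [hw]; abel
        have hnw : ‖w - m‖ = ρ := by
          rw [hwm, norm_neg, norm_smul, Real.norm_eq_abs,
            abs_of_nonneg (by positivity : (0:ℝ) ≤ ρ / ‖gradient f m‖),
            div_mul_cancel₀ _ hgmpos.ne']
        have hinw : ⟪gradient f m, w - m⟫ = -(ρ * ‖gradient f m‖) := by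
          rw [hwm, inner_neg_right, real_inner_smul_right, real_inner_self_eq_norm_sq]
          field_simp
        have hfw : f w ≤ f x + η := by
          have h1 := taylor m w
          rw [hinw, hnw] at h1
          have habs := (abs_le.mp h1).2
          have h2 : ρ * ‖gradient f m‖ - κ₂ * ρ ^ 2 ≥ |ε| := by
            have : ρ * ‖gradient f m‖ - κ₂ * ρ ^ 2 = ρ * (‖gradient f m‖ - κ₂ * ρ) := by ring
            rw [this, ← hρG]
            exact mul_le_mul_of_nonneg_left hgmlow hρ0
          have hεabs : |ε| = ε := abs_of_pos hcase
          linarith [habs, h2, hεabs, hε]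
        obtain ⟨y, hy1, hy2⟩ := exists_on_segment hcont m w
          (mem_uIcc.mpr (Or.inr ⟨hfw, by linarith [hε, hcase]⟩))
        exact ⟨y, hy1, hy2.trans (le_of_eq hnw)⟩
    have hq : (D - δ ^ 2 / (8 * D)) ^ 2 = D ^ 2 - δ ^ 2 / 4 + (δ ^ 2 / (8 * D)) ^ 2 := by
      field_simp
      ring
    have hR0 : 0 ≤ D - δ ^ 2 / (8 * D) := by
      have h1 : δ ^ 2 / (8 * D) ≤ D / 2 := by
        rw [div_le_div_iff₀ (by positivity) (by norm_num : (0:ℝ) < 2)]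
        linarith [hδD]
      linarith
    have hxm_le : ‖x - m‖ ≤ D - δ ^ 2 / (8 * D) := by
      have hsq : ‖x - m‖ ^ 2 ≤ (D - δ ^ 2 / (8 * D)) ^ 2 := by
        rw [hxm, hq]
        linarith [sq_nonneg (δ ^ 2 / (8 * D))]
      calc ‖x - m‖ = Real.sqrt (‖x - m‖ ^ 2) := (Real.sqrt_sq (norm_nonneg _)).symm
        _ ≤ Real.sqrt ((D - δ ^ 2 / (8 * D)) ^ 2) := Real.sqrt_le_sqrt hsq
        _ = D - δ ^ 2 / (8 * D) := Real.sqrt_sq hR0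
    have hρ2 : ρ < δ ^ 2 / (8 * D) := by
      refine lt_of_le_of_lt hρle ?_
      rw [div_lt_div_iff₀ (by positivity) (by positivity)]
      have h8 : 8 * (κ₂ * D) ≤ G := by linarith
      linarith [mul_le_mul_of_nonneg_left h8 (sq_nonneg δ), mul_pos (pow_pos hδ0 2) hG]
    have hymemA : y ∈ A := hymem
    have hDy : D ≤ dist x y := infDist_le_dist_of_mem hymemA
    have : dist x y < D := by
      calc dist x y ≤ dist x m + dist m y := dist_triangle _ _ _
        _ = ‖x - m‖ + ‖y - m‖ := by rw [dist_eq_norm, dist_eq_norm, norm_sub_rev m y]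
        _ ≤ (D - δ ^ 2 / (8 * D)) + ρ := add_le_add hxm_le hydist
        _ < D := by linarith [hρ2]
    linarith
  intro q hq
  exact huniq q p₀ hq ⟨hp₀mem, hp₀dist.symm⟩
end
end

section
/- Let f : ℝ^d → ℝ satisfy the standing assumptions. There is a constant C > 0 depending only on f such that the following holds: for every level t > 0 and every x ∈ L_t with ∇f(x) ≠ 0, if 0 < η ≤ ‖∇f(x)‖²/C, then x has a unique metric projection P_{t+η}(x) onto the level set L_{t+η}, and ‖P_{t+η}(x) − x − η F(x)‖ ≤ C η²/‖∇f(x)‖³, where F(x) = ∇f(x)/‖∇f(x)‖². -/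
open Metric Set Filter Topology MeasureTheory

noncomputable section

variable {d : ℕ}

section Aux

set_option maxHeartbeats 1000000

open InnerProductSpace
open scoped RealInnerProductSpace

local notation "E" => EuclideanSpace ℝ (Fin d)

lemma grad_inner (f : E → ℝ) (y v : E) : ⟪gradient f y, v⟫_ℝ = fderiv ℝ f y v :=
  InnerProductSpace.toDual_symm_apply

lemma fderiv_eq_toDual_grad (f : E → ℝ) (y : E) :
    fderiv ℝ f y = InnerProductSpace.toDual ℝ E (gradient f y) :=
  ((InnerProductSpace.toDual ℝ E).apply_symm_apply (fderiv ℝ f y)).symm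

lemma grad_diffble (f : E → ℝ) (hf : ContDiff ℝ 2 f) : Differentiable ℝ (gradient f) := by
  have h1 : ContDiff ℝ 1 (fderiv ℝ f) := hf.fderiv_right (by norm_num)
  have : Differentiable ℝ (fderiv ℝ f) := h1.differentiable one_ne_zero
  exact ((InnerProductSpace.toDual ℝ E).symm.toContinuousLinearEquiv
    : StrongDual ℝ E ≃L[ℝ] E).differentiable.comp this

lemma grad_lip (f : E → ℝ) (hf : ContDiff ℝ 2 f) {K : ℝ}
    (hK : ∀ x, ‖fderiv ℝ (gradient f) x‖ ≤ K) (y z : E) :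
    ‖gradient f z - gradient f y‖ ≤ K * ‖z - y‖ :=
  convex_univ.norm_image_sub_le_of_norm_fderiv_le
    (fun w _ => (grad_diffble f hf w)) (fun w _ => hK w) (mem_univ y) (mem_univ z)

lemma taylor_bound (f : E → ℝ) (hf : ContDiff ℝ 2 f) {K : ℝ}
    (hK : ∀ x, ‖fderiv ℝ (gradient f) x‖ ≤ K) (y z : E) :
    |f z - f y - ⟪gradient f y, z - y⟫_ℝ| ≤ K * ‖z - y‖ ^ 2 := by
  have hdiff : Differentiable ℝ f := hf.differentiable (by norm_num)
  have key : ‖f z - f y - (fderiv ℝ f y) (z - y)‖ ≤ (K * ‖z - y‖) * ‖z - y‖ := by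
    apply (convex_segment y z).norm_image_sub_le_of_norm_fderiv_le'
      (fun w _ => hdiff w) ?_ (left_mem_segment ℝ y z) (right_mem_segment ℝ y z)
    intro w hw
    have h1 : ‖fderiv ℝ f w - fderiv ℝ f y‖ = ‖gradient f w - gradient f y‖ := by
      rw [fderiv_eq_toDual_grad, fderiv_eq_toDual_grad, ← map_sub]
      exact (InnerProductSpace.toDual ℝ E).norm_map _
    have h2 : ‖w - y‖ ≤ ‖z - y‖ := by
      rcases hw with ⟨a, b, ha, hb, hab, rfl⟩
      have : a • y + b • z - y = b • (z - y) := by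
        rw [smul_sub]; rw [show a = 1 - b by linarith]; module
      rw [this, norm_smul, Real.norm_eq_abs, abs_of_nonneg hb]
      nlinarith [norm_nonneg (z - y)]
    calc ‖fderiv ℝ f w - fderiv ℝ f y‖ = ‖gradient f w - gradient f y‖ := h1
      _ ≤ K * ‖w - y‖ := grad_lip f hf hK y w
      _ ≤ K * ‖z - y‖ := by
          have hK0 : 0 ≤ K := le_trans (norm_nonneg _) (hK y)
          exact mul_le_mul_of_nonneg_left h2 hK0
  have h3 : (fderiv ℝ f y) (z - y) = ⟪gradient f y, z - y⟫_ℝ :=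
    (InnerProductSpace.toDual_symm_apply).symm
  rw [← Real.norm_eq_abs, ← h3]
  calc ‖f z - f y - (fderiv ℝ f y) (z - y)‖ ≤ (K * ‖z - y‖) * ‖z - y‖ := key
    _ = K * ‖z - y‖ ^ 2 := by ring

/-- First-order condition: a metric projection onto a level set is along the gradient. -/
lemma lagrange_cond (f : E → ℝ) (hf : ContDiff ℝ 2 f) {c : ℝ} {x p : E}
    (hgp : gradient f p ≠ 0) (hfp : f p = c)
    (hmin : ∀ y, f y = c → ‖p - x‖ ≤ ‖y - x‖) :
    ∃ μ : ℝ, p - x = μ • gradient f p := by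
  set φ : E → ℝ := fun y => ⟪y - x, y - x⟫_ℝ with hφ
  have hminφ : IsMinOn φ {y | f y = f p} p := by
    intro y hy
    have h1 : ‖p - x‖ ≤ ‖y - x‖ := hmin y (by rw [← hfp]; exact hy)
    simp only [φ, mem_setOf_eq, real_inner_self_eq_norm_sq]
    exact pow_le_pow_left₀ (norm_nonneg _) h1 2
  have hextr : IsLocalExtrOn φ {y | f y = f p} p := hminφ.localize.isExtr
  have hsub : HasStrictFDerivAt (fun y : E => y - x) (ContinuousLinearMap.id ℝ E) p :=
    (hasStrictFDerivAt_id p).sub_const x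
  have hφ' : HasStrictFDerivAt φ
      ((fderivInnerCLM ℝ (p - x, p - x)).comp
        ((ContinuousLinearMap.id ℝ E).prod (ContinuousLinearMap.id ℝ E))) p :=
    hsub.inner ℝ hsub
  have hf' : HasStrictFDerivAt f (fderiv ℝ f p) p :=
    (hf.contDiffAt.hasStrictFDerivAt (by norm_num))
  obtain ⟨a, b, hab, heq⟩ := hextr.exists_multipliers_of_hasStrictFDerivAt_1d hf' hφ'
  have happ : ∀ v : E, a * (fderiv ℝ f p v) + b * (⟪p - x, v⟫_ℝ + ⟪v, p - x⟫_ℝ) = 0 := by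
    intro v
    have := ContinuousLinearMap.ext_iff.mp heq v
    simpa [fderivInnerCLM_apply] using this
  have hvec : ∀ v : E, ⟪a • gradient f p + (2 * b) • (p - x), v⟫_ℝ = 0 := by
    intro v
    rw [inner_add_left, real_inner_smul_left, real_inner_smul_left, grad_inner]
    have h := happ v
    have hc : ⟪v, p - x⟫_ℝ = ⟪p - x, v⟫_ℝ := real_inner_comm _ _
    linear_combination h - b * hc
  have hzero : a • gradient f p + (2 * b) • (p - x) = 0 := by
    have := hvec (a • gradient f p + (2 * b) • (p - x))
    exact inner_self_eq_zero.mp this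
  have hb : b ≠ 0 := by
    intro hb0
    apply hgp
    have ha : a ≠ 0 := by
      intro ha0; exact hab (by simp [ha0, hb0, Prod.ext_iff])
    have : a • gradient f p = 0 := by simpa [hb0] using hzero
    simpa [ha] using (smul_eq_zero.mp this)
  refine ⟨-a / (2 * b), ?_⟩
  have h2b : (2 * b) ≠ 0 := by simpa using hb
  have h2 : (2 * b) • (p - x) = (-a) • gradient f p := by
    rw [neg_smul]; rw [← sub_eq_zero]; rw [sub_neg_eq_add, add_comm]; exact hzero
  calc p - x = ((2*b)⁻¹ * (2*b)) • (p - x) := by rw [inv_mul_cancel₀ h2b, one_smul]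
    _ = (2*b)⁻¹ • ((2*b) • (p - x)) := by rw [mul_smul]
    _ = (2*b)⁻¹ • ((-a) • gradient f p) := by rw [h2]
    _ = (-a / (2*b)) • gradient f p := by rw [smul_smul]; congr 1; ring

lemma scalar_G {K g η r G : ℝ} (hK : 0 ≤ K) (hg : 0 < g) (hη : 0 < η)
    (hηC : η * (100*(K+1)) ≤ g^2) (hr : 0 ≤ r) (hrg : r * g ≤ 2*η)
    (hG : |G - g| ≤ K*r) : g/2 ≤ G := by
  obtain ⟨hG1, hG2⟩ := abs_le.mp hG
  have h1 : K*η*100 ≤ g^2 := by nlinarith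
  have h2 : K*r*g ≤ 2*(K*η) := by nlinarith [mul_le_mul_of_nonneg_left hrg hK]
  have h3 : K*r*50 ≤ g := by
    have : (K*r*50)*g ≤ g*g := by nlinarith
    nlinarith
  have hKr0 : 0 ≤ K*r := mul_nonneg hK hr
  linarith

lemma scalar_key {K g η r G c : ℝ} (hK : 0 ≤ K) (hg : 0 < g) (hη : 0 < η)
    (hηC : η * (100*(K+1)) ≤ g^2) (hr : 0 ≤ r) (hrg : r * g ≤ 2*η)
    (hG : |G - g| ≤ K*r) (hT : |c*G^2 - η| ≤ K*r^2) :
    0 < c ∧ c*g^2 ≤ 5*η ∧ c*(K*r)*g^3 + |c*g^2 - η| * g^2 ≤ (100*(K+1))*η^2 := by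
  obtain ⟨hG1, hG2⟩ := abs_le.mp hG
  obtain ⟨hT1, hT2⟩ := abs_le.mp hT
  have h1 : K*η*100 ≤ g^2 := by nlinarith
  have h2 : K*r*g ≤ 2*(K*η) := by nlinarith [mul_le_mul_of_nonneg_left hrg hK]
  have h3 : K*r*50 ≤ g := by
    have : (K*r*50)*g ≤ g*g := by nlinarith
    nlinarith
  have hKr0 : 0 ≤ K*r := mul_nonneg hK hr
  have hGlb : g/2 ≤ G := by linarith
  have hGub : G ≤ 2*g := by linarith
  have hGpos : 0 < G := by linarith
  have hG2pos : 0 < G^2 := by positivity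
  have hrg0 : 0 ≤ r*g := mul_nonneg hr hg.le
  have h4 : K*r^2*g^2 ≤ 4*(K*η)*η := by
    nlinarith [mul_le_mul h2 hrg hrg0 (by nlinarith : (0:ℝ) ≤ 2*(K*η))]
  have h5 : K*r^2*25 ≤ η := by
    have hg2 : (0:ℝ) < g^2 := by positivity
    have : (K*r^2*25)*g^2 ≤ η*g^2 := by nlinarith
    nlinarith
  have hc : 0 < c := by
    by_contra h
    push_neg at h
    have h0 : c * G^2 ≤ 0 :=
      mul_nonpos_iff.mpr (Or.inr ⟨h, hG2pos.le⟩)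
    linarith
  have hg2le : g^2 ≤ 4*G^2 := by nlinarith
  have hcg : c*g^2 ≤ 5*η := by
    have hh := mul_le_mul_of_nonneg_left hg2le hc.le
    have hh2 : c*(4*G^2) = 4*(c*G^2) := by ring
    linarith
  refine ⟨hc, hcg, ?_⟩
  have hsplit : |c*g^2 - η| ≤ c*|g^2 - G^2| + |c*G^2 - η| := by
    have he : c*g^2 - η = c*(g^2 - G^2) + (c*G^2 - η) := by ring
    rw [he]
    refine (abs_add_le _ _).trans ?_
    rw [abs_mul, abs_of_pos hc]
  have habs2 : |g^2 - G^2| ≤ (K*r)*(3*g) := by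
    have he : g^2 - G^2 = (g - G)*(g + G) := by ring
    rw [he, abs_mul]
    have h6 : |g - G| ≤ K*r := by rw [abs_sub_comm]; exact hG
    have h7 : |g + G| ≤ 3*g := by rw [abs_of_pos (by linarith)]; linarith
    exact mul_le_mul h6 h7 (abs_nonneg _) hKr0
  have hb : |c*g^2 - η| ≤ c*((K*r)*(3*g)) + K*r^2 := by
    have := mul_le_mul_of_nonneg_left habs2 hc.le
    linarith
  have hD : |c*g^2 - η| * g^2 ≤ 34*(K*η)*η := by
    have hKrg0 : 0 ≤ K*r*g := by positivity
    have hmm := mul_le_mul hcg h2 hKrg0 (by linarith : (0:ℝ) ≤ 5*η)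
    have hb2 := mul_le_mul_of_nonneg_right hb (by positivity : (0:ℝ) ≤ g^2)
    nlinarith
  have hterm1 : c*(K*r)*g^3 ≤ 10*(K*η)*η := by
    have hKrg0 : 0 ≤ K*r*g := by positivity
    have hmm := mul_le_mul hcg h2 hKrg0 (by linarith : (0:ℝ) ≤ 5*η)
    nlinarith
  nlinarith [sq_nonneg η, mul_nonneg hK (sq_nonneg η)]

lemma scalar_uniq {K g η s r Gp Gq c ν : ℝ} (hK : 0 ≤ K) (hg : 0 < g) (hη : 0 < η)
    (hηC : η * (100*(K+1)) ≤ g^2) (hs : 0 ≤ s) (hr : 0 ≤ r) (hrg : r * g ≤ 2*η)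
    (hGp : g/2 ≤ Gp) (hGq : 0 ≤ Gq) (hcg : c*g^2 ≤ 5*η)
    (hcr : c*Gp = r) (hνr : ν*Gq = r) (hGdiff : |Gp - Gq| ≤ K*s)
    (hmain : s ≤ c*(K*s) + |c - ν| * Gq) : s = 0 := by
  have hKη : K*η*100 ≤ g^2 := by nlinarith
  have hGppos : 0 < Gp := by linarith
  have hprod : |c - ν| * (Gq * Gp) = r * |Gq - Gp| := by
    have he : (c - ν) * (Gq * Gp) = r * (Gq - Gp) := by
      linear_combination Gq * hcr - Gp * hνr
    calc |c - ν| * (Gq*Gp) = |(c-ν)*(Gq*Gp)| := by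
          rw [abs_mul, abs_of_nonneg (mul_nonneg hGq hGppos.le)]
      _ = |r*(Gq - Gp)| := by rw [he]
      _ = r * |Gq - Gp| := by rw [abs_mul, abs_of_nonneg hr]
  have hA : 0 ≤ |c - ν| * Gq := mul_nonneg (abs_nonneg _) hGq
  have h1 : |c - ν| * Gq * Gp ≤ r*(K*s) := by
    have hh : |c - ν| * Gq * Gp = r * |Gq - Gp| := by rw [← hprod]; ring
    rw [hh]
    exact mul_le_mul_of_nonneg_left (by rw [abs_sub_comm]; exact hGdiff) hr
  have h2 : |c - ν| * Gq * g ≤ 2*(r*(K*s)) := by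
    nlinarith [mul_le_mul_of_nonneg_left hGp hA]
  have hKs : 0 ≤ K*s := mul_nonneg hK hs
  have h3 : s*g^2 ≤ (c*g^2)*(K*s) + 2*(r*g)*(K*s) := by
    have hm := mul_le_mul_of_nonneg_right hmain (sq_nonneg g)
    nlinarith [mul_le_mul_of_nonneg_right h2 hg.le]
  have h4 : s*g^2 ≤ 9*((K*η)*s) := by
    nlinarith [mul_le_mul_of_nonneg_right hcg hKs, mul_le_mul_of_nonneg_right hrg hKs]
  have h5 : (K*η)*s*100 ≤ s*g^2 := by nlinarith [mul_le_mul_of_nonneg_left hKη hs]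
  have h6 : s*g^2 ≤ 0 := by nlinarith
  have h7 : s*g^2 = 0 := le_antisymm h6 (by positivity)
  rcases mul_eq_zero.mp h7 with h | h
  · exact h
  · exact absurd h (by positivity)

end Aux

section Main

set_option maxHeartbeats 2000000

open InnerProductSpace
open scoped RealInnerProductSpace

local notation "E" => EuclideanSpace ℝ (Fin d)

/-- there is a constant `C > 0` depending only on `f` such that for every `x` on a
positive level `t` with `∇f(x) ≠ 0` and every `0 < η ≤ ‖∇f(x)‖²/C`, the point `x` has a unique
metric projection onto the level set at level `t + η`, and this projection equals
`x + η∇f(x)/‖∇f(x)‖²` up to an error of at most `Cη²/‖∇f(x)‖³`. -/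
theorem proj_expansion (f : EuclideanSpace ℝ (Fin d) → ℝ) (hf : StandingAssumptions f) :
    ∃ C > 0, ∀ t : ℝ, 0 < t → ∀ x : EuclideanSpace ℝ (Fin d), f x = t →
      gradient f x ≠ 0 → ∀ η : ℝ, 0 < η → η ≤ ‖gradient f x‖ ^ 2 / C →
        (∃! p, IsProjOn {y | f y = t + η} x p) ∧
        (∀ p, IsProjOn {y | f y = t + η} x p →
          ‖p - x - η • ((‖gradient f x‖ ^ 2)⁻¹ • gradient f x)‖
            ≤ C * η ^ 2 / ‖gradient f x‖ ^ 3) := by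
  obtain ⟨hC2, -, -, ⟨K, hK⟩, -, -⟩ := hf
  have hK0 : 0 ≤ K := le_trans (norm_nonneg _) (hK 0)
  refine ⟨100*(K+1), by positivity, ?_⟩
  intro t ht x hfx hgx η hη hηle
  set a : ℝ := ‖gradient f x‖ with ha
  have hg : 0 < a := norm_pos_iff.mpr hgx
  have hηC : η * (100*(K+1)) ≤ a^2 := by
    rw [le_div_iff₀ (by positivity : (0:ℝ) < 100*(K+1))] at hηle
    exact hηle
  set A : Set E := {y | f y = t + η} with hA
  have hA_closed : IsClosed A := isClosed_eq hC2.continuous continuous_const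
  -- construct a point of A at distance ≤ 2η/a from x
  set w : E := gradient f x with hw
  set s₁ : ℝ := 2*η/a^2 with hs₁def
  have hs₁pos : 0 < s₁ := by positivity
  set ψ : ℝ → ℝ := fun s => f (x + s • w) with hψ
  have hcont : Continuous ψ :=
    hC2.continuous.comp (continuous_const.add (continuous_id.smul continuous_const))
  have hψ0 : ψ 0 = t := by simp [ψ, hfx]
  have hψs₁ : t + η ≤ ψ s₁ := by
    have htay := taylor_bound f hC2 hK x (x + s₁ • w)
    have hzx : x + s₁ • w - x = s₁ • w := by abel
    rw [hzx] at htay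
    have hinner : ⟪gradient f x, s₁ • w⟫_ℝ = s₁ * a^2 := by
      rw [real_inner_smul_right, ← hw, real_inner_self_eq_norm_sq, ← ha]
    have hnorm : ‖s₁ • w‖^2 = s₁^2 * a^2 := by
      rw [norm_smul, Real.norm_eq_abs, mul_pow, sq_abs, ha]
    rw [hinner, hnorm, hfx] at htay
    have h1 : s₁ * a^2 = 2*η := by
      rw [hs₁def]; field_simp
    have h2 : K * (s₁^2 * a^2) ≤ η := by
      have he : K * (s₁^2 * a^2) * a^2 = 4*(K*η)*η := by
        rw [hs₁def]; field_simp; ring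
      have h100 : K*η*100 ≤ a^2 := by nlinarith
      have h3 : K * (s₁^2*a^2) * a^2 ≤ η * a^2 := by
        rw [he]; nlinarith
      have hg2 : (0:ℝ) < a^2 := by positivity
      nlinarith
    have := abs_le.mp htay
    simp only [ψ]
    linarith [this.1, h1]
  obtain ⟨s, hsI, hψs⟩ := intermediate_value_Icc hs₁pos.le hcont.continuousOn
    (⟨by rw [hψ0]; linarith, hψs₁⟩ : t + η ∈ Icc (ψ 0) (ψ s₁))
  set y₀ : E := x + s • w with hy₀
  have hy₀A : y₀ ∈ A := hψs
  have hdy₀ : dist x y₀ = s * a := by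
    rw [dist_eq_norm]
    have : x - y₀ = -(s • w) := by rw [hy₀]; abel
    rw [this, norm_neg, norm_smul, Real.norm_eq_abs, abs_of_nonneg hsI.1, ha]
  have hdy₀a : dist x y₀ * a ≤ 2*η := by
    rw [hdy₀]
    have h1 : s * a^2 ≤ s₁ * a^2 :=
      mul_le_mul_of_nonneg_right hsI.2 (by positivity)
    have h2 : s₁ * a^2 = 2*η := by rw [hs₁def]; field_simp
    nlinarith
  -- facts about any projection
  have key : ∀ p, IsProjOn A x p → ∃ c : ℝ,
      p - x = c • gradient f p ∧ 0 < c ∧ c * a^2 ≤ 5*η ∧ a/2 ≤ ‖gradient f p‖ ∧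
      ‖p - x‖ * a ≤ 2*η ∧
      ‖p - x - η • ((a^2)⁻¹ • gradient f x)‖ ≤ (100*(K+1)) * η^2 / a^3 := by
    rintro p ⟨hpA, hpd⟩
    have hpA' : f p = t + η := hpA
    have hdxp : dist x p ≤ dist x y₀ := by
      rw [hpd]; exact infDist_le_dist_of_mem hy₀A
    have hpx_eq : ‖p - x‖ = dist x p := by rw [dist_eq_norm, norm_sub_rev]
    have hr2 : ‖p - x‖ * a ≤ 2*η := by
      rw [hpx_eq]
      calc dist x p * a ≤ dist x y₀ * a :=
            mul_le_mul_of_nonneg_right hdxp hg.le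
        _ ≤ 2*η := hdy₀a
    have hlip : ‖gradient f p - gradient f x‖ ≤ K * ‖p - x‖ := grad_lip f hC2 hK x p
    have hGdiff : |‖gradient f p‖ - a| ≤ K * ‖p - x‖ :=
      (abs_norm_sub_norm_le _ _).trans hlip
    have hGhalf : a/2 ≤ ‖gradient f p‖ :=
      scalar_G hK0 hg hη hηC (norm_nonneg _) hr2 hGdiff
    have hgp : gradient f p ≠ 0 := by
      intro h0
      rw [h0, norm_zero] at hGhalf
      linarith
    have hmin : ∀ y, f y = t + η → ‖p - x‖ ≤ ‖y - x‖ := by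
      intro y hy
      rw [hpx_eq]
      calc dist x p ≤ dist x y := by rw [hpd]; exact infDist_le_dist_of_mem hy
        _ = ‖y - x‖ := by rw [dist_eq_norm, norm_sub_rev]
    obtain ⟨c, hc⟩ := lagrange_cond f hC2 hgp hpA' hmin
    have htay := taylor_bound f hC2 hK p x
    have hip : ⟪gradient f p, x - p⟫_ℝ = -(c * ‖gradient f p‖^2) := by
      have hxp : x - p = -(p - x) := by abel
      rw [hxp, inner_neg_right, hc, real_inner_smul_right, real_inner_self_eq_norm_sq]
    have heq2 : f x - f p - ⟪gradient f p, x - p⟫_ℝ = c * ‖gradient f p‖^2 - η := by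
      rw [hfx, hpA', hip]; ring
    rw [heq2, norm_sub_rev x p] at htay
    obtain ⟨hcpos, hcg5, hbound3⟩ :=
      scalar_key hK0 hg hη hηC (norm_nonneg (p - x)) hr2 hGdiff htay
    refine ⟨c, hc, hcpos, hcg5, hGhalf, hr2, ?_⟩
    -- the error bound
    have hdecomp : p - x - η • ((a^2)⁻¹ • gradient f x) =
        c • (gradient f p - gradient f x) + (c - η/a^2) • gradient f x := by
      rw [hc]; module
    have hXle : ‖p - x - η • ((a^2)⁻¹ • gradient f x)‖ ≤
        c * (K * ‖p - x‖) + (|c * a^2 - η|/a^2) * a := by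
      rw [hdecomp]
      refine (norm_add_le _ _).trans ?_
      have e1 : ‖c • (gradient f p - gradient f x)‖ ≤ c * (K * ‖p - x‖) := by
        rw [norm_smul, Real.norm_eq_abs, abs_of_pos hcpos]
        exact mul_le_mul_of_nonneg_left hlip hcpos.le
      have e2 : ‖(c - η/a^2) • gradient f x‖ = (|c * a^2 - η|/a^2) * a := by
        rw [norm_smul, Real.norm_eq_abs, ← ha]
        congr 1
        have : c - η/a^2 = (c*a^2 - η)/a^2 := by field_simp
        rw [this, abs_div, abs_of_pos (by positivity : (0:ℝ) < a^2)]
      linarith [e1, e2.le, e2.ge]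
    rw [le_div_iff₀ (by positivity : (0:ℝ) < a^3)]
    have hmul := mul_le_mul_of_nonneg_right hXle (by positivity : (0:ℝ) ≤ a^3)
    have hring : (c * (K * ‖p - x‖) + (|c * a^2 - η|/a^2) * a) * a^3 =
        c * (K * ‖p - x‖) * a^3 + |c * a^2 - η| * a^2 := by
      field_simp
    calc ‖p - x - η • ((a^2)⁻¹ • gradient f x)‖ * a^3
        ≤ (c * (K * ‖p - x‖) + (|c * a^2 - η|/a^2) * a) * a^3 := hmul
      _ = c * (K * ‖p - x‖) * a^3 + |c * a^2 - η| * a^2 := hring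
      _ ≤ (100*(K+1)) * η^2 := hbound3
  -- existence of a projection
  obtain ⟨p₀, hp₀A, hp₀d⟩ := hA_closed.exists_infDist_eq_dist ⟨y₀, hy₀A⟩ x
  have hp₀ : IsProjOn A x p₀ := ⟨hp₀A, hp₀d.symm⟩
  -- uniqueness
  have huniq : ∀ p q, IsProjOn A x p → IsProjOn A x q → p = q := by
    intro p q hp hq
    obtain ⟨c, hc, hcpos, hcg5, hGhp, hr2, -⟩ := key p hp
    obtain ⟨ν, hν, hνpos, -, -, -, -⟩ := key q hq
    have hreq : ‖q - x‖ = ‖p - x‖ := by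
      have h1 : dist x q = dist x p := by rw [hq.2, hp.2]
      calc ‖q - x‖ = dist x q := by rw [dist_eq_norm, norm_sub_rev]
        _ = dist x p := h1
        _ = ‖p - x‖ := by rw [dist_eq_norm, norm_sub_rev]
    have hcr : c * ‖gradient f p‖ = ‖p - x‖ := by
      rw [hc, norm_smul, Real.norm_eq_abs, abs_of_pos hcpos]
    have hνr : ν * ‖gradient f q‖ = ‖p - x‖ := by
      rw [← hreq, hν, norm_smul, Real.norm_eq_abs, abs_of_pos hνpos]
    have hlpq : ‖gradient f p - gradient f q‖ ≤ K * ‖p - q‖ := grad_lip f hC2 hK q p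
    have hGdiffpq : |‖gradient f p‖ - ‖gradient f q‖| ≤ K * ‖p - q‖ :=
      (abs_norm_sub_norm_le _ _).trans hlpq
    have hdecomp2 : p - q = c • (gradient f p - gradient f q) + (c - ν) • gradient f q := by
      have : p - q = (p - x) - (q - x) := by abel
      rw [this, hc, hν]; module
    have hmain : ‖p - q‖ ≤ c * (K * ‖p - q‖) + |c - ν| * ‖gradient f q‖ := by
      have e1 : ‖c • (gradient f p - gradient f q)‖ ≤ c * (K * ‖p - q‖) := by
        rw [norm_smul, Real.norm_eq_abs, abs_of_pos hcpos]
        exact mul_le_mul_of_nonneg_left hlpq hcpos.le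
      have e2 : ‖(c - ν) • gradient f q‖ = |c - ν| * ‖gradient f q‖ := by
        rw [norm_smul, Real.norm_eq_abs]
      calc ‖p - q‖ = ‖c • (gradient f p - gradient f q) + (c - ν) • gradient f q‖ := by
            rw [← hdecomp2]
        _ ≤ ‖c • (gradient f p - gradient f q)‖ + ‖(c - ν) • gradient f q‖ := norm_add_le _ _
        _ ≤ c * (K * ‖p - q‖) + |c - ν| * ‖gradient f q‖ := by linarith [e1, e2.le]
    have hs0 : ‖p - q‖ = 0 :=
      scalar_uniq hK0 hg hη hηC (norm_nonneg _) (norm_nonneg _) hr2 hGhp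
        (norm_nonneg _) hcg5 hcr hνr hGdiffpq hmain
    rw [← sub_eq_zero]
    exact norm_eq_zero.mp hs0
  refine ⟨⟨p₀, hp₀, fun q hq => huniq q p₀ hq hp₀⟩, ?_⟩
  intro p hp
  obtain ⟨c, -, -, -, -, -, hbd⟩ := key p hp
  exact hbd

end Main
end
end

section
/- Let f : ℝ^d → ℝ satisfy the standing assumptions. Let x_* be a mode of f and let x ≠ x_* lie in the basin of attraction of x_*. Let ζ_x be the solution of ζ_x(0) = x, ζ_x'(t) = ∇f(ζ_x(t))/‖∇f(ζ_x(t))‖², which is defined for t ∈ [0, f(x_*) − f(x)). Then ζ_x(t) → x_* as t ↗ f(x_*) − f(x). -/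
open Metric Set Filter Topology MeasureTheory

noncomputable section

variable {d : ℕ}

/-- `γ` is the gradient flow line of `f` starting at `x`. -/
def IsGradientFlow (f : EuclideanSpace ℝ (Fin d) → ℝ) (x : EuclideanSpace ℝ (Fin d))
    (γ : ℝ → EuclideanSpace ℝ (Fin d)) : Prop :=
  γ 0 = x ∧ ∀ t : ℝ, 0 ≤ t → HasDerivAt γ (gradient f (γ t)) t

/-- `x` lies in the basin of attraction of `x₀` for the gradient flow of `f`. -/
def InBasin (f : EuclideanSpace ℝ (Fin d) → ℝ) (x₀ x : EuclideanSpace ℝ (Fin d)) : Prop :=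
  ∃ γ : ℝ → EuclideanSpace ℝ (Fin d), IsGradientFlow f x γ ∧ Tendsto γ atTop (nhds x₀)

/-- the level-parameterized flow `ζ_x` started at a point `x ≠ x_*` of the basin
of attraction of the mode `x_*` converges to `x_*` as the level increases to `f x_* - f x`. -/
theorem level_flow_converges_to_mode (f : EuclideanSpace ℝ (Fin d) → ℝ)
    (hf : StandingAssumptions f) (xstar : EuclideanSpace ℝ (Fin d))
    (hmode : IsLocalMax f xstar) (x : EuclideanSpace ℝ (Fin d)) (hx : x ≠ xstar)
    (hbasin : InBasin f xstar x) (ζ : ℝ → EuclideanSpace ℝ (Fin d))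
    (hζ0 : ζ 0 = x)
    (hζ : ∀ t ∈ Ico (0 : ℝ) (f xstar - f x),
      HasDerivAt ζ ((‖gradient f (ζ t)‖ ^ 2)⁻¹ • gradient f (ζ t)) t) :
    Tendsto ζ (nhdsWithin (f xstar - f x) (Iio (f xstar - f x))) (nhds xstar) := by
  obtain ⟨hC2, -, ⟨Mg, hMg⟩, ⟨MH, hMH⟩, -, -⟩ := hf
  obtain ⟨γ, ⟨hγ0, hγ'⟩, hγlim⟩ := hbasin
  set T : ℝ := f xstar - f x with hT
  have hdf : Differentiable ℝ f := hC2.differentiable two_ne_zero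
  -- gradient is C¹
  have hg1 : ContDiff ℝ 1 (gradient f) := by
    have h1 : ContDiff ℝ 1 (fderiv ℝ f) := hC2.fderiv_right (by norm_num)
    exact ((InnerProductSpace.toDual ℝ (EuclideanSpace ℝ (Fin d))).symm.contDiff.comp h1 : _)
  -- gradient is Lipschitz
  have hglip : LipschitzWith MH.toNNReal (gradient f) := by
    refine lipschitzWith_of_nnnorm_fderiv_le (hg1.differentiable one_ne_zero) (fun y => ?_)
    rw [← NNReal.coe_le_coe, coe_nnnorm, Real.coe_toNNReal']
    exact le_max_of_le_left (hMH y)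
  -- chain rule
  have hchain : ∀ (c : ℝ → EuclideanSpace ℝ (Fin d)) (v : EuclideanSpace ℝ (Fin d)) (t : ℝ),
      HasDerivAt c v t → HasDerivAt (fun u => f (c u)) (inner ℝ (gradient f (c t)) v : ℝ) t := by
    intro c v t hc
    have h1 := (hdf (c t)).hasFDerivAt.comp_hasDerivAt t hc
    have h2 : (inner ℝ (gradient f (c t)) v : ℝ) = fderiv ℝ f (c t) v := by
      simp [gradient, InnerProductSpace.toDual_symm_apply]
    rw [h2]; exact h1
  set φ : ℝ → ℝ := fun s => f (γ s) - f x with hφdef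
  have hφd : ∀ s, 0 ≤ s → HasDerivAt φ (‖gradient f (γ s)‖ ^ 2) s := by
    intro s hs
    have := (hchain γ _ s (hγ' s hs)).sub_const (f x)
    rwa [real_inner_self_eq_norm_sq] at this
  have hφ0 : φ 0 = 0 := by simp [hφdef, hγ0]
  -- the gradient does not vanish along γ
  have hgne : ∀ s, 0 ≤ s → gradient f (γ s) ≠ 0 := by
    intro s₀ hs₀ hz
    have hfwd : ∀ b, s₀ ≤ b → γ b = γ s₀ := by
      intro b hb
      have := ODE_solution_unique (v := fun _ y => gradient f y) (K := MH.toNNReal)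
        (f := γ) (g := fun _ => γ s₀) (a := s₀) (b := b)
        (fun _ => hglip)
        (fun u hu => (hγ' u (hs₀.trans hu.1)).continuousAt.continuousWithinAt)
        (fun u hu => (hγ' u (hs₀.trans hu.1)).hasDerivWithinAt)
        continuousOn_const
        (fun u _ => by simpa [hz] using (hasDerivAt_const u (γ s₀)).hasDerivWithinAt)
        rfl
      exact this ⟨hb, le_rfl⟩
    have hxstar : γ s₀ = xstar := by
      refine tendsto_nhds_unique (tendsto_const_nhds.congr' ?_) hγlim
      filter_upwards [eventually_ge_atTop s₀] with b hb
      exact (hfwd b hb).symm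
    have hbwd : γ 0 = γ s₀ := by
      have := ODE_solution_unique_of_mem_Icc_left (v := fun _ y => gradient f y)
        (K := MH.toNNReal) (s := fun _ => univ)
        (f := γ) (g := fun _ => γ s₀) (a := 0) (b := s₀)
        (fun _ _ => hglip.lipschitzOnWith)
        (fun u hu => (hγ' u hu.1).continuousAt.continuousWithinAt)
        (fun u hu => (hγ' u hu.1.le).hasDerivWithinAt)
        (fun _ _ => mem_univ _)
        continuousOn_const
        (fun u _ => by simpa [hz] using (hasDerivAt_const u (γ s₀)).hasDerivWithinAt)
        (fun _ _ => mem_univ _)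
        rfl
      exact this ⟨le_rfl, hs₀⟩
    apply hx
    rw [← hγ0, hbwd, hxstar]
  -- φ is strictly monotone on [0, ∞)
  have hφcont : ContinuousOn φ (Ici 0) := fun s hs => (hφd s hs).continuousAt.continuousWithinAt
  have hsm : StrictMonoOn φ (Ici 0) := by
    refine strictMonoOn_of_deriv_pos (convex_Ici 0) hφcont (fun s hs => ?_)
    rw [interior_Ici] at hs
    rw [(hφd s hs.le).deriv]
    exact pow_pos (norm_pos_iff.2 (hgne s hs.le)) 2
  have hmonoφ := hsm.monotoneOn
  have hφlim : Tendsto φ atTop (𝓝 T) := by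
    have : Tendsto (fun s => f (γ s)) atTop (𝓝 (f xstar)) :=
      (hC2.continuous.tendsto xstar).comp hγlim
    exact this.sub_const (f x)
  have hφle : ∀ s, 0 ≤ s → φ s ≤ T := by
    intro s hs
    refine ge_of_tendsto hφlim ?_
    filter_upwards [eventually_ge_atTop s] with u hu
    exact hmonoφ hs (hs.trans hu) hu
  have hφlt : ∀ s, 0 ≤ s → φ s < T := fun s hs =>
    lt_of_lt_of_le (hsm hs (by positivity : (0:ℝ) ≤ s + 1) (lt_add_one s))
      (hφle (s + 1) (by positivity))
  have hφnn : ∀ s, 0 ≤ s → 0 ≤ φ s := fun s hs => hφ0 ▸ hmonoφ self_mem_Ici hs hs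
  -- η := ζ ∘ φ
  set v : ℝ → EuclideanSpace ℝ (Fin d) → EuclideanSpace ℝ (Fin d) :=
    fun s y => ‖gradient f (γ s)‖ ^ 2 • ((‖gradient f y‖ ^ 2)⁻¹ • gradient f y) with hvdef
  have hγv : ∀ s, 0 ≤ s → v s (γ s) = gradient f (γ s) := by
    intro s hs
    simp only [hvdef]
    rw [smul_smul, mul_inv_cancel₀ (pow_ne_zero 2 (norm_ne_zero_iff.2 (hgne s hs))), one_smul]
  have hηd : ∀ s, 0 ≤ s → HasDerivAt (fun u => ζ (φ u)) (v s (ζ (φ s))) s := by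
    intro s hs
    exact (hζ (φ s) ⟨hφnn s hs, hφlt s hs⟩).scomp s (hφd s hs)
  -- key claim : γ s = ζ (φ s) for all s ≥ 0
  have key : ∀ s, 0 ≤ s → γ s = ζ (φ s) := by
    by_contra hcon
    push_neg at hcon
    set W : Set ℝ := {s | 0 ≤ s ∧ γ s ≠ ζ (φ s)} with hW
    have hWne : W.Nonempty := by
      obtain ⟨s₁, h1, h2⟩ := hcon; exact ⟨s₁, h1, h2⟩
    have hWbd : BddBelow W := ⟨0, fun w hw => hw.1⟩
    set c := sInf W with hc
    have hc0 : 0 ≤ c := le_csInf hWne (fun w hw => hw.1)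
    have hbelow : ∀ u, 0 ≤ u → u < c → γ u = ζ (φ u) := by
      intro u hu0 huc
      by_contra hne
      exact absurd (csInf_le hWbd ⟨hu0, hne⟩) (not_le.2 huc)
    have hcc : γ c = ζ (φ c) := by
      rcases eq_or_lt_of_le hc0 with h0 | hpos
      · rw [← h0, hγ0, hφ0, hζ0]
      · have h1 : Tendsto γ (𝓝[<] c) (𝓝 (γ c)) :=
          (hγ' c hc0).continuousAt.continuousWithinAt
        have h2 : Tendsto (fun u => ζ (φ u)) (𝓝[<] c) (𝓝 (ζ (φ c))) :=
          (hηd c hc0).continuousAt.continuousWithinAt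
        refine tendsto_nhds_unique (h1) (h2.congr' ?_)
        filter_upwards [Ioo_mem_nhdsLT hpos] with u hu
        exact (hbelow u hu.1.le hu.2).symm
    -- local Lipschitz field near γ c
    have hFc : ContDiffAt ℝ 1
        (fun y => (‖gradient f y‖ ^ 2)⁻¹ • gradient f y) (γ c) := by
      have h1 : ContDiffAt ℝ 1 (fun y => ‖gradient f y‖ ^ 2) (γ c) :=
        (hg1.contDiffAt).norm_sq (𝕜 := ℝ)
      exact (h1.inv (pow_ne_zero 2 (norm_ne_zero_iff.2 (hgne c hc0)))).smul hg1.contDiffAt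
    obtain ⟨K, t, htmem, hlipF⟩ := hFc.exists_lipschitzOnWith
    obtain ⟨r, hr0, hball⟩ := Metric.mem_nhds_iff.1 htmem
    have hvlip : ∀ s : ℝ, LipschitzOnWith ((Mg ^ 2).toNNReal * K) (v s) (ball (γ c) r) := by
      intro s
      rw [lipschitzOnWith_iff_dist_le_mul]
      intro y hy z hz
      have hF : dist ((‖gradient f y‖ ^ 2)⁻¹ • gradient f y)
          ((‖gradient f z‖ ^ 2)⁻¹ • gradient f z) ≤ K * dist y z :=
        hlipF.dist_le_mul y (hball hy) z (hball hz)
      have ha : ‖gradient f (γ s)‖ ^ 2 ≤ Mg ^ 2 :=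
        pow_le_pow_left₀ (norm_nonneg _) (hMg _) 2
      calc dist (v s y) (v s z)
          = ‖gradient f (γ s)‖ ^ 2 * dist ((‖gradient f y‖ ^ 2)⁻¹ • gradient f y)
            ((‖gradient f z‖ ^ 2)⁻¹ • gradient f z) := by
            simp only [hvdef]
            rw [dist_smul₀, Real.norm_eq_abs, abs_of_nonneg (by positivity)]
        _ ≤ Mg ^ 2 * (K * dist y z) := by
            refine mul_le_mul ha hF dist_nonneg (by positivity)
        _ = (((Mg ^ 2).toNNReal * K : NNReal) : ℝ) * dist y z := by
            rw [NNReal.coe_mul, Real.coe_toNNReal _ (sq_nonneg Mg)]; ring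
    -- both curves stay near γ c on a small interval to the right of c
    have h1 : γ ⁻¹' ball (γ c) r ∈ 𝓝 c :=
      (hγ' c hc0).continuousAt.preimage_mem_nhds (ball_mem_nhds _ hr0)
    have h2 : (fun u => ζ (φ u)) ⁻¹' ball (γ c) r ∈ 𝓝 c := by
      refine (hηd c hc0).continuousAt.preimage_mem_nhds ?_
      rw [← hcc]
      exact ball_mem_nhds _ hr0
    obtain ⟨ε, hε0, hεsub⟩ := Metric.mem_nhds_iff.1 (inter_mem h1 h2)
    set b := c + ε / 2 with hb
    have hcb : c < b := by rw [hb]; linarith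
    have hmem : ∀ u ∈ Icc c b, γ u ∈ ball (γ c) r ∧ ζ (φ u) ∈ ball (γ c) r := by
      intro u hu
      have : u ∈ ball c ε := by
        rw [mem_ball, Real.dist_eq, abs_of_nonneg (by linarith [hu.1])]
        have := hu.2; rw [hb] at this; linarith
      exact hεsub this
    have huniq : EqOn γ (fun u => ζ (φ u)) (Icc c b) := by
      refine ODE_solution_unique_of_mem_Icc_right (v := v) (s := fun _ => ball (γ c) r)
        (fun u _ => hvlip u)
        (fun u hu => (hγ' u (hc0.trans hu.1)).continuousAt.continuousWithinAt)
        (fun u hu => ?_)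
        (fun u hu => (hmem u (Ico_subset_Icc_self hu)).1)
        (fun u hu => (hηd u (hc0.trans hu.1)).continuousAt.continuousWithinAt)
        (fun u hu => ((hηd u (hc0.trans hu.1)).hasDerivWithinAt))
        (fun u hu => (hmem u (Ico_subset_Icc_self hu)).2)
        hcc
      · rw [hγv u (hc0.trans hu.1)]
        exact (hγ' u (hc0.trans hu.1)).hasDerivWithinAt
    obtain ⟨w, hwW, hwb⟩ : ∃ w ∈ W, w < b := by
      by_contra h
      push_neg at h
      exact absurd (le_csInf hWne h) (not_le.2 hcb)
    exact hwW.2 (huniq ⟨csInf_le hWbd hwW, hwb.le⟩)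
  -- conclusion
  rw [tendsto_def]
  intro U hU
  obtain ⟨s₀', hs₀'⟩ := eventually_atTop.1 (hγlim hU)
  set s₀ := max s₀' 0 with hs₀def
  have hs₀0 : (0:ℝ) ≤ s₀ := le_max_right _ _
  refine mem_of_superset (Ioo_mem_nhdsLT (hφlt s₀ hs₀0)) ?_
  intro t ht
  obtain ⟨s₁, hs₁⟩ :=
    ((hφlim.eventually (eventually_gt_nhds ht.2)).and (eventually_ge_atTop s₀)).exists
  have hs₀s₁ : s₀ ≤ s₁ := hs₁.2
  have hivt := intermediate_value_Icc hs₀s₁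
    (hφcont.mono (fun u hu => hs₀0.trans hu.1))
  obtain ⟨s, hsmem, hst⟩ := hivt ⟨ht.1.le, hs₁.1.le⟩
  have hs0 : (0:ℝ) ≤ s := hs₀0.trans hsmem.1
  have : γ s = ζ t := by rw [← hst]; exact key s hs0
  rw [mem_preimage, ← this]
  exact hs₀' s (le_trans (le_max_left _ _) hsmem.1)
end
end

section
/- Let f : ℝ^d → ℝ satisfy the standing assumptions, with κ₁ a bound on ‖∇f‖ and κ₂ a Lipschitz constant of ∇f. Let x lie in the basin of attraction of a mode x_*, fix a level t_# ∈ (f(x), f(x_*)), and let Z(x) = {ζ_x(t) : t ∈ [0, t_# − f(x)]} be the piece of the gradient line from x up to level t_#, where ζ_x is the level-parameterized flow from x. Set ν(x) = (1/2)·min{‖∇f(z)‖ : z ∈ Z(x)} > 0. Then there exist constants δ > 0 and C' > 0, depending on f, x and t_#, such that for every y with ‖y − x‖ ≤ δ, the point y also reaches level t_# along its gradient line, and the Hausdorff distance between the corresponding gradient-line pieces satisfies d_H(Z(x), Z(y)) ≤ C'‖x − y‖. -/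
open Metric Set Filter Topology MeasureTheory

noncomputable section

variable {d : ℕ}

private lemma clamp01_lip (a b : ℝ) :
    |max 0 (min 1 a) - max 0 (min 1 b)| ≤ |a - b| := by
  rw [max_comm 0 (min 1 a), max_comm 0 (min 1 b)]
  refine (abs_max_sub_max_le_abs _ _ _).trans ?_
  refine (abs_min_sub_min_le_max 1 a 1 b).trans ?_
  simp

private lemma clamp01_nonneg (a : ℝ) : 0 ≤ max 0 (min 1 a) := le_max_left _ _

private lemma clamp01_le_one (a : ℝ) : max 0 (min 1 a) ≤ 1 :=
  max_le zero_le_one (min_le_left _ _)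

private lemma clamp01_eq_one {a : ℝ} (h : 1 ≤ a) : max 0 (min 1 a) = 1 := by
  rw [min_eq_left h]; exact max_eq_right zero_le_one

private lemma clamp01_eq_zero {a : ℝ} (h : a ≤ 0) : max 0 (min 1 a) = 0 :=
  max_eq_left ((min_le_right 1 a).trans h)

private lemma inv_sq_smul_lipschitz {E : Type*} [NormedAddCommGroup E] [NormedSpace ℝ E]
    (u v : E) (c C : ℝ) (hc : 0 < c) (hcu : c ≤ ‖u‖) (hcv : c ≤ ‖v‖)
    (hCu : ‖u‖ ≤ C) (hCv : ‖v‖ ≤ C) :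
    ‖(‖u‖ ^ 2)⁻¹ • u - (‖v‖ ^ 2)⁻¹ • v‖ ≤ (1 / c ^ 2 + 2 * C ^ 2 / c ^ 4) * ‖u - v‖ := by
  have hu : 0 < ‖u‖ := hc.trans_le hcu
  have hv : 0 < ‖v‖ := hc.trans_le hcv
  set a : ℝ := (‖u‖ ^ 2)⁻¹ with ha_def
  set b : ℝ := (‖v‖ ^ 2)⁻¹ with hb_def
  have hau : a • u - b • v = a • (u - v) + (a - b) • v := by
    rw [smul_sub, sub_smul]; abel
  have ha_pos : 0 < a := by rw [ha_def]; positivity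
  have hb_pos : 0 < b := by rw [hb_def]; positivity
  have ha_le : a ≤ 1 / c ^ 2 := by
    rw [ha_def, one_div]
    exact inv_anti₀ (by positivity) (by nlinarith)
  have hb_le : b ≤ 1 / c ^ 2 := by
    rw [hb_def, one_div]
    exact inv_anti₀ (by positivity) (by nlinarith)
  have h3 : |‖v‖ ^ 2 - ‖u‖ ^ 2| ≤ 2 * C * ‖u - v‖ := by
    have e : ‖v‖ ^ 2 - ‖u‖ ^ 2 = (‖v‖ - ‖u‖) * (‖v‖ + ‖u‖) := by ring
    rw [e, abs_mul, abs_of_nonneg (show (0:ℝ) ≤ ‖v‖ + ‖u‖ by positivity)]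
    have h4 : |‖v‖ - ‖u‖| ≤ ‖u - v‖ := by
      rw [norm_sub_rev u v]; exact abs_norm_sub_norm_le v u
    calc |‖v‖ - ‖u‖| * (‖v‖ + ‖u‖) ≤ ‖u - v‖ * (2 * C) :=
          mul_le_mul h4 (by linarith) (by positivity) (norm_nonneg _)
      _ = 2 * C * ‖u - v‖ := by ring
  have e2 : a - b = (‖v‖ ^ 2 - ‖u‖ ^ 2) * (a * b) := by
    rw [ha_def, hb_def]
    field_simp
  have hab : a * b ≤ 1 / c ^ 4 := by
    have : (1 : ℝ) / c ^ 2 * (1 / c ^ 2) = 1 / c ^ 4 := by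
      field_simp
    nlinarith
  have h5 : |a - b| ≤ 2 * C * ‖u - v‖ * (1 / c ^ 4) := by
    rw [e2, abs_mul, abs_of_pos (mul_pos ha_pos hb_pos)]
    have h2C : 0 ≤ 2 * C * ‖u - v‖ := by
      have : 0 ≤ C := hu.le.trans hCu
      positivity
    exact mul_le_mul h3 hab (by positivity) h2C
  calc ‖a • u - b • v‖ = ‖a • (u - v) + (a - b) • v‖ := by rw [hau]
    _ ≤ ‖a • (u - v)‖ + ‖(a - b) • v‖ := norm_add_le _ _
    _ = |a| * ‖u - v‖ + |a - b| * ‖v‖ := by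
        rw [norm_smul, norm_smul, Real.norm_eq_abs, Real.norm_eq_abs]
    _ ≤ (1 / c ^ 2 + 2 * C ^ 2 / c ^ 4) * ‖u - v‖ := by
        rw [abs_of_pos ha_pos]
        have hC0 : 0 < C := hu.trans_le hCu
        have hnn : 0 ≤ ‖u - v‖ := norm_nonneg _
        have hb2 := mul_le_mul h5 hCv (norm_nonneg v) (by positivity)
        have e3 : 2 * C * ‖u - v‖ * (1 / c ^ 4) * C = 2 * C ^ 2 / c ^ 4 * ‖u - v‖ := by ring
        have e4 : (1 / c ^ 2 + 2 * C ^ 2 / c ^ 4) * ‖u - v‖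
            = 1 / c ^ 2 * ‖u - v‖ + 2 * C ^ 2 / c ^ 4 * ‖u - v‖ := by ring
        rw [e4]
        have := mul_le_mul_of_nonneg_right ha_le hnn
        linarith
set_option maxHeartbeats 1000000 in
/-- the piece of gradient line up to level `t_#` depends Lipschitz-continuously
(in Hausdorff distance) on the starting point, for starting points close enough to `x`; and the
minimal gradient norm along the piece from `x` is positive. -/
theorem gradient_line_piece_lipschitz (f : EuclideanSpace ℝ (Fin d) → ℝ)
    (hf : StandingAssumptions f)
    (κ₁ : ℝ) (hκ₁ : ∀ x, ‖gradient f x‖ ≤ κ₁)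
    (κ₂ : ℝ) (hκ₂ : ∀ x y, ‖gradient f y - gradient f x‖ ≤ κ₂ * ‖y - x‖)
    (x xstar : EuclideanSpace ℝ (Fin d)) (hmode : IsLocalMax f xstar)
    (hbasin : InBasin f xstar x)
    (tsharp : ℝ) (h1 : f x < tsharp) (h2 : tsharp < f xstar)
    (ζx : ℝ → EuclideanSpace ℝ (Fin d)) (hζx0 : ζx 0 = x)
    (hζx : ∀ t ∈ Icc (0 : ℝ) (tsharp - f x),
      HasDerivAt ζx ((‖gradient f (ζx t)‖ ^ 2)⁻¹ • gradient f (ζx t)) t)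
    (hζxf : ∀ t ∈ Icc (0 : ℝ) (tsharp - f x), f (ζx t) = f x + t) :
    0 < sInf ((fun z => ‖gradient f z‖) '' (ζx '' Icc (0 : ℝ) (tsharp - f x))) ∧
    ∃ δ > 0, ∃ C' > 0, ∀ y : EuclideanSpace ℝ (Fin d), ‖y - x‖ ≤ δ →
      ∃ ζy : ℝ → EuclideanSpace ℝ (Fin d), ζy 0 = y ∧
        (∀ t ∈ Icc (0 : ℝ) (tsharp - f y),
          HasDerivAt ζy ((‖gradient f (ζy t)‖ ^ 2)⁻¹ • gradient f (ζy t)) t) ∧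
        (∀ t ∈ Icc (0 : ℝ) (tsharp - f y), f (ζy t) = f y + t) ∧
        hausdorffDist (ζx '' Icc (0 : ℝ) (tsharp - f x))
          (ζy '' Icc (0 : ℝ) (tsharp - f y)) ≤ C' * ‖x - y‖ := by
    classical
  set Kc := ζx '' Icc (0:ℝ) (tsharp - f x) with hKc_def
  set T : ℝ := tsharp - f x with hT_def
  have hT : 0 < T := sub_pos.mpr h1
  have hdiff : Differentiable ℝ f := hf.1.differentiable (by norm_num)
  have hfd : ∀ z, HasFDerivAt f (InnerProductSpace.toDual ℝ _ (gradient f z)) z :=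
    fun z => (hdiff z).hasGradientAt.hasFDerivAt
  have hζxc : ContinuousOn ζx (Icc 0 T) :=
    fun t ht => ((hζx t ht).continuousAt).continuousWithinAt
  have hKcomp : IsCompact Kc := isCompact_Icc.image_of_continuousOn hζxc
  have hKne : Kc.Nonempty := ⟨ζx 0, mem_image_of_mem _ (left_mem_Icc.mpr hT.le)⟩
  have hgcont : Continuous (gradient f) := by
    have h : Continuous (fderiv ℝ f) := hf.1.continuous_fderiv (by norm_num)
    exact (InnerProductSpace.toDual ℝ _).symm.continuous.comp h
  -- no critical point on the curve
  have hcrit : ∀ t ∈ Icc (0:ℝ) T, gradient f (ζx t) ≠ 0 := by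
    intro t ht h0
    have hudiff : UniqueDiffWithinAt ℝ (Icc (0:ℝ) T) t := (uniqueDiffOn_Icc hT) t ht
    have hcomp : HasDerivAt (f ∘ ζx)
        ((InnerProductSpace.toDual ℝ _ (gradient f (ζx t)))
          ((‖gradient f (ζx t)‖^2)⁻¹ • gradient f (ζx t))) t :=
      (hfd (ζx t)).comp_hasDerivAt t (hζx t ht)
    rw [h0] at hcomp
    simp only [smul_zero, map_zero, ContinuousLinearMap.zero_apply] at hcomp
    have hd1 : HasDerivWithinAt (fun s => f x + s) ((0:ℝ)) (Icc 0 T) t :=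
      (hcomp.hasDerivWithinAt).congr (fun s hs => (hζxf s hs).symm) (hζxf t ht).symm
    have hd2 : HasDerivWithinAt (fun s => f x + s) ((1:ℝ)) (Icc 0 T) t :=
      ((hasDerivAt_id t).const_add (f x)).hasDerivWithinAt
    have h01 := hd1.derivWithin hudiff
    rw [hd2.derivWithin hudiff] at h01
    norm_num at h01
  have hScomp : IsCompact ((fun z => ‖gradient f z‖) '' Kc) :=
    hKcomp.image (continuous_norm.comp hgcont)
  have hSne : ((fun z => ‖gradient f z‖) '' Kc).Nonempty := hKne.image _
  set m := sInf ((fun z => ‖gradient f z‖) '' Kc) with hm_def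
  have hm : 0 < m := by
    obtain ⟨z, hzK, hzm⟩ := hScomp.sInf_mem hSne
    obtain ⟨t, ht, rfl⟩ := hzK
    rw [hm_def.symm] at hzm
    rw [← hzm]
    exact norm_pos_iff.mpr (hcrit t ht)
  refine ⟨hm, ?_⟩
  -- lower bound on gradient norm on the curve
  have mK : ∀ p ∈ Kc, m ≤ ‖gradient f p‖ := fun p hp =>
    csInf_le hScomp.bddBelow (mem_image_of_mem _ hp)
  have κ₁pos : 0 < κ₁ := by
    have h := mK (ζx 0) (mem_image_of_mem _ (left_mem_Icc.mpr hT.le))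
    exact lt_of_lt_of_le hm (h.trans (hκ₁ _))
  have κ₂pos : 0 < κ₂ := by
    by_contra hneg
    push_neg at hneg
    obtain ⟨M, hM⟩ := hf.2.1
    have hc : gradient f (ζx 0) ≠ 0 := hcrit 0 (left_mem_Icc.mpr hT.le)
    have hconst : ∀ a, gradient f a = gradient f (ζx 0) := by
      intro a
      have h := hκ₂ (ζx 0) a
      have h2 : κ₂ * ‖a - ζx 0‖ ≤ 0 := mul_nonpos_of_nonpos_of_nonneg hneg (norm_nonneg _)
      have := le_antisymm (h.trans h2) (norm_nonneg _)
      rwa [norm_eq_zero, sub_eq_zero] at this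
    set c := gradient f (ζx 0) with hc_def
    have hnc : 0 < ‖c‖ ^ 2 := pow_pos (norm_pos_iff.mpr hc) 2
    set φ : ℝ → ℝ := fun t => f (ζx 0 + t • c) - t * ‖c‖ ^ 2 with hφ_def
    have hφ : ∀ t : ℝ, HasDerivAt φ 0 t := by
      intro t
      have hγ : HasDerivAt (fun s : ℝ => ζx 0 + s • c) c t := by
        simpa using ((hasDerivAt_id t).smul_const c).const_add (ζx 0)
      have hcomp : HasDerivAt (fun s : ℝ => f (ζx 0 + s • c))
          ((InnerProductSpace.toDual ℝ _ (gradient f (ζx 0 + t • c))) c) t :=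
        (hfd _).comp_hasDerivAt t hγ
      rw [hconst, InnerProductSpace.toDual_apply_apply, real_inner_self_eq_norm_sq] at hcomp
      have hlin : HasDerivAt (fun s : ℝ => s * ‖c‖ ^ 2) (‖c‖ ^ 2) t := by
        simpa using (hasDerivAt_id t).mul_const (‖c‖ ^ 2)
      have h9 := hcomp.sub hlin
      simp only [sub_self] at h9
      exact h9
    have hcon : ∀ t : ℝ, φ t = φ 0 := by
      have := is_const_of_deriv_eq_zero (f := φ)
        (fun t => (hφ t).differentiableAt) (fun t => (hφ t).deriv)
      intro t; exact this t 0
    have hval := hcon ((2 * M + 1) / ‖c‖ ^ 2)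
    rw [hφ_def] at hval
    simp only [zero_smul, add_zero, zero_mul, sub_zero] at hval
    rw [div_mul_cancel₀ _ (ne_of_gt hnc)] at hval
    have ha1 := abs_le.mp (hM (ζx 0 + ((2 * M + 1) / ‖c‖ ^ 2) • c))
    have ha2 := abs_le.mp (hM (ζx 0))
    linarith [ha1.1, ha1.2, ha2.1, ha2.2]
  -- the tube radius
  set r : ℝ := m / (2 * κ₂) with hr_def
  have hr : 0 < r := by rw [hr_def]; positivity
  have hκ₂r : κ₂ * r = m / 2 := by rw [hr_def]; field_simp
  -- gradient bounded below near the curve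
  have hnear : ∀ z, infDist z Kc ≤ r → m / 2 ≤ ‖gradient f z‖ := by
    intro z hz
    obtain ⟨k, hkK, hk⟩ := hKcomp.exists_infDist_eq_dist hKne z
    have h := hκ₂ z k
    have hd : ‖k - z‖ ≤ r := by
      rw [← dist_eq_norm, dist_comm, ← hk]; exact hz
    have h2 : κ₂ * ‖k - z‖ ≤ m / 2 := by
      calc κ₂ * ‖k - z‖ ≤ κ₂ * r := by
            exact mul_le_mul_of_nonneg_left hd κ₂pos.le
        _ = m / 2 := hκ₂r
    have h3 := norm_sub_norm_le (gradient f k) (gradient f z)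
    have h4 := mK k hkK
    linarith
  have hnear' : ∀ z, infDist z Kc ≤ r → (0:ℝ) < ‖gradient f z‖ :=
    fun z hz => lt_of_lt_of_le (by linarith) (hnear z hz)
  -- the vector field and its cutoff
  set vf : EuclideanSpace ℝ (Fin d) → EuclideanSpace ℝ (Fin d) :=
    fun z => (‖gradient f z‖ ^ 2)⁻¹ • gradient f z with hvf_def
  set χ : EuclideanSpace ℝ (Fin d) → ℝ :=
    fun z => max 0 (min 1 (2 - (2 / r) * infDist z Kc)) with hχ_def
  set w : EuclideanSpace ℝ (Fin d) → EuclideanSpace ℝ (Fin d) :=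
    fun z => χ z • vf z with hw_def
  have hχ1 : ∀ z, infDist z Kc ≤ r / 2 → χ z = 1 := by
    intro z hz
    apply clamp01_eq_one
    have h2 : (2 / r) * infDist z Kc ≤ (2 / r) * (r / 2) :=
      mul_le_mul_of_nonneg_left hz (by positivity)
    have h3 : (2 / r) * (r / 2) = 1 := by field_simp
    linarith
  have hχ0 : ∀ z, r ≤ infDist z Kc → χ z = 0 := by
    intro z hz
    apply clamp01_eq_zero
    have h2 : (2 / r) * r ≤ (2 / r) * infDist z Kc :=
      mul_le_mul_of_nonneg_left hz (by positivity)
    have h3 : (2 / r) * r = 2 := by field_simp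
    linarith
  have hχlip : ∀ a b, |χ a - χ b| ≤ (2 / r) * ‖a - b‖ := by
    intro a b
    refine (clamp01_lip _ _).trans ?_
    have e : (2 - (2 / r) * infDist a Kc) - (2 - (2 / r) * infDist b Kc)
        = (2 / r) * (infDist b Kc - infDist a Kc) := by ring
    rw [e, abs_mul, abs_of_pos (show (0:ℝ) < 2 / r by positivity)]
    refine mul_le_mul_of_nonneg_left ?_ (by positivity)
    rw [abs_sub_le_iff]
    constructor
    · have := infDist_le_infDist_add_dist (x := b) (y := a) (s := Kc)
      rw [dist_eq_norm, norm_sub_rev] at this; linarith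
    · have := infDist_le_infDist_add_dist (x := a) (y := b) (s := Kc)
      rw [dist_eq_norm] at this; linarith
  have hvnorm : ∀ z, infDist z Kc ≤ r → ‖vf z‖ ≤ 2 / m := by
    intro z hz
    have hg2 : (0:ℝ) < ‖gradient f z‖ := hnear' z hz
    have he : ‖vf z‖ = (‖gradient f z‖)⁻¹ := by
      rw [hvf_def]
      simp only []
      rw [norm_smul, Real.norm_eq_abs, abs_of_pos (by positivity), pow_two, mul_inv]
      field_simp
    rw [he]
    have h2 := inv_anti₀ (show (0:ℝ) < m / 2 by linarith) (hnear z hz)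
    rwa [inv_div] at h2
  have hwnorm : ∀ z, ‖w z‖ ≤ 2 / m := by
    intro z
    rcases le_or_gt (infDist z Kc) r with h | h
    · have : ‖w z‖ = χ z * ‖vf z‖ := by
        rw [hw_def]; simp only []
        rw [norm_smul, Real.norm_eq_abs, abs_of_nonneg (clamp01_nonneg _)]
      rw [this]
      calc χ z * ‖vf z‖ ≤ 1 * (2 / m) :=
            mul_le_mul (clamp01_le_one _) (hvnorm z h) (norm_nonneg _) zero_le_one
        _ = 2 / m := one_mul _
    · have h0 : χ z = 0 := hχ0 z h.le
      rw [hw_def]; simp only [h0, zero_smul, norm_zero]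
      positivity
  -- Lipschitz constant for vf near the curve
  set LV : ℝ := κ₂ * (1 / (m/2) ^ 2 + 2 * κ₁ ^ 2 / (m/2) ^ 4) with hLV_def
  have hLV : 0 < LV := by
    rw [hLV_def]; positivity
  have hvlip : ∀ a b, infDist a Kc ≤ r → infDist b Kc ≤ r →
      ‖vf a - vf b‖ ≤ LV * ‖a - b‖ := by
    intro a b ha hb
    have h1 := inv_sq_smul_lipschitz (gradient f a) (gradient f b) (m/2) κ₁
      (by linarith) (hnear a ha) (hnear b hb) (hκ₁ a) (hκ₁ b)
    have h2 := hκ₂ b a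
    calc ‖vf a - vf b‖ ≤ (1 / (m/2) ^ 2 + 2 * κ₁ ^ 2 / (m/2) ^ 4)
          * ‖gradient f a - gradient f b‖ := h1
      _ ≤ (1 / (m/2) ^ 2 + 2 * κ₁ ^ 2 / (m/2) ^ 4) * (κ₂ * ‖a - b‖) := by
          refine mul_le_mul_of_nonneg_left h2 (by positivity)
      _ = LV * ‖a - b‖ := by rw [hLV_def]; ring
  -- global Lipschitz constant for w
  set Lw : ℝ := LV + (2 / r) * (2 / m) with hLw_def
  have hLw : 0 < Lw := by rw [hLw_def]; positivity
  have hwlip_aux : ∀ a b, infDist a Kc ≤ r → ‖w a - w b‖ ≤ Lw * ‖a - b‖ := by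
    intro a b ha
    rcases le_or_gt (infDist b Kc) r with hb | hb
    · have e : χ a • vf a - χ b • vf b = χ a • (vf a - vf b) + (χ a - χ b) • vf b := by
        rw [smul_sub, sub_smul]; abel
      have : ‖w a - w b‖ ≤ χ a * ‖vf a - vf b‖ + |χ a - χ b| * ‖vf b‖ := by
        rw [hw_def]; simp only []
        rw [e]
        refine (norm_add_le _ _).trans ?_
        rw [norm_smul, norm_smul, Real.norm_eq_abs, Real.norm_eq_abs,
          abs_of_nonneg (clamp01_nonneg _)]
      refine this.trans ?_
      have t1 : χ a * ‖vf a - vf b‖ ≤ 1 * (LV * ‖a - b‖) :=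
        mul_le_mul (clamp01_le_one _) (hvlip a b ha hb) (norm_nonneg _) zero_le_one
      have t2 : |χ a - χ b| * ‖vf b‖ ≤ ((2 / r) * ‖a - b‖) * (2 / m) :=
        mul_le_mul (hχlip a b) (hvnorm b hb) (norm_nonneg _) (by positivity)
      rw [one_mul] at t1
      have e2 : (LV + 2 / r * (2 / m)) * ‖a - b‖
          = LV * ‖a - b‖ + 2 / r * ‖a - b‖ * (2 / m) := by ring
      rw [hLw_def, e2]
      linarith
    · have h0 : χ b = 0 := hχ0 b hb.le
      have e : w b = 0 := by rw [hw_def]; simp only [h0, zero_smul]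
      rw [e, sub_zero]
      have : ‖w a‖ = |χ a - χ b| * ‖vf a‖ := by
        rw [hw_def]; simp only [h0, sub_zero]
        rw [norm_smul, Real.norm_eq_abs]
      rw [this]
      have t2 : |χ a - χ b| * ‖vf a‖ ≤ ((2 / r) * ‖a - b‖) * (2 / m) :=
        mul_le_mul (hχlip a b) (hvnorm a ha) (norm_nonneg _) (by positivity)
      have e2 : (LV + 2 / r * (2 / m)) * ‖a - b‖
          = LV * ‖a - b‖ + 2 / r * ‖a - b‖ * (2 / m) := by ring
      rw [hLw_def, e2]
      linarith [mul_nonneg hLV.le (norm_nonneg (a - b))]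
  have hwlip : ∀ a b, ‖w a - w b‖ ≤ Lw * ‖a - b‖ := by
    intro a b
    rcases le_or_gt (infDist a Kc) r with ha | ha
    · exact hwlip_aux a b ha
    rcases le_or_gt (infDist b Kc) r with hb | hb
    · rw [norm_sub_rev, norm_sub_rev a b]
      exact hwlip_aux b a hb
    · have e1 : w a = 0 := by rw [hw_def]; simp only [hχ0 a ha.le, zero_smul]
      have e2 : w b = 0 := by rw [hw_def]; simp only [hχ0 b hb.le, zero_smul]
      rw [e1, e2, sub_zero, norm_zero]
      positivity
  have hwlipschitz : LipschitzWith (Real.toNNReal Lw) w := by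
    refine LipschitzWith.of_dist_le_mul fun a b => ?_
    rw [dist_eq_norm, dist_eq_norm, Real.coe_toNNReal _ hLw.le]
    exact hwlip a b
  -- f is κ₁-Lipschitz
  have hgradnorm : ∀ z, ‖fderiv ℝ f z‖ = ‖gradient f z‖ := by
    intro z
    have e : gradient f z = (InnerProductSpace.toDual ℝ _).symm (fderiv ℝ f z) := rfl
    rw [e, LinearIsometryEquiv.norm_map]
  have hflip : ∀ a b, |f b - f a| ≤ κ₁ * ‖b - a‖ := by
    intro a b
    have := Convex.norm_image_sub_le_of_norm_fderiv_le (f := f) (C := κ₁) (s := univ)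
      (fun z _ => hdiff z) (fun z _ => by rw [hgradnorm]; exact hκ₁ z)
      convex_univ (mem_univ a) (mem_univ b)
    simpa [Real.norm_eq_abs] using this
  -- inner product derivative is one near the curve
  have hfone : ∀ z, infDist z Kc ≤ r →
      (InnerProductSpace.toDual ℝ _ (gradient f z)) (vf z) = 1 := by
    intro z hz
    have hg2 : (0:ℝ) < ‖gradient f z‖ := hnear' z hz
    rw [hvf_def]; simp only []
    rw [InnerProductSpace.toDual_apply_apply, real_inner_smul_right, real_inner_self_eq_norm_sq]
    exact inv_mul_cancel₀ (by positivity)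
  -- define the constants
  set Cd : ℝ := Real.exp (Lw * (T + 1)) + 2 * κ₁ / m with hCd_def
  have hCd : 0 < Cd := by
    rw [hCd_def]; positivity
  set δ : ℝ := min (min (1 / κ₁) ((T / 2) / κ₁)) ((r / 2) / Cd) with hδ_def
  have hδ : 0 < δ := by
    rw [hδ_def]
    refine lt_min (lt_min (by positivity) (by positivity)) (by positivity)
  refine ⟨δ, hδ, Cd, hCd, ?_⟩
  intro y hy
  have hy' : ‖x - y‖ ≤ δ := by rw [norm_sub_rev]; exact hy
  -- basic estimates for y
  have hfyx : |f y - f x| ≤ κ₁ * ‖x - y‖ := by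
    rw [norm_sub_rev]; exact hflip x y
  have hκδ1 : κ₁ * δ ≤ 1 := by
    have h := min_le_left (min (1 / κ₁) ((T / 2) / κ₁)) ((r / 2) / Cd)
    have h2 := (h.trans (min_le_left _ _)) 
    have : δ ≤ 1 / κ₁ := le_trans (le_of_eq hδ_def) h2
    calc κ₁ * δ ≤ κ₁ * (1 / κ₁) := mul_le_mul_of_nonneg_left this κ₁pos.le
      _ = 1 := by rw [mul_one_div, div_self (ne_of_gt κ₁pos)]
  have hκδT : κ₁ * δ ≤ T / 2 := by
    have h2 : δ ≤ (T / 2) / κ₁ := le_trans (le_of_eq hδ_def)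
      ((min_le_left _ _).trans (min_le_right _ _))
    calc κ₁ * δ ≤ κ₁ * ((T / 2) / κ₁) := mul_le_mul_of_nonneg_left h2 κ₁pos.le
      _ = T / 2 := by rw [mul_comm, div_mul_cancel₀ _ (ne_of_gt κ₁pos)]
  have hδr : Cd * δ ≤ r / 2 := by
    have h2 : δ ≤ (r / 2) / Cd := le_trans (le_of_eq hδ_def) (min_le_right _ _)
    calc Cd * δ ≤ Cd * ((r / 2) / Cd) := mul_le_mul_of_nonneg_left h2 hCd.le
      _ = r / 2 := by rw [mul_comm, div_mul_cancel₀ _ (ne_of_gt hCd)]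
  have hfyκ : |f y - f x| ≤ κ₁ * δ := hfyx.trans (mul_le_mul_of_nonneg_left hy' κ₁pos.le)
  set Ty : ℝ := tsharp - f y with hTy_def
  have hTyT : Ty ≤ T + 1 := by
    have := (abs_le.mp hfyκ).1
    rw [hTy_def, hT_def]; linarith
  have hTy0 : T / 2 ≤ Ty := by
    have := (abs_le.mp hfyκ).2
    rw [hTy_def, hT_def]; linarith
  have hTy0' : (0:ℝ) ≤ Ty := le_trans (by linarith) hTy0
  -- Picard-Lindelof existence for the cutoff field
  have hpl : IsPicardLindelof (fun _ z => w z)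
      (⟨0, by constructor <;> linarith⟩ : Icc (-1 : ℝ) (T + 2)) y
      (Real.toNNReal ((2 / m) * (T + 2))) 0 (Real.toNNReal (2 / m)) (Real.toNNReal Lw) := by
    refine ⟨fun t _ => hwlipschitz.lipschitzOnWith,
      fun z _ => continuousOn_const, fun t _ z _ => ?_, ?_⟩
    · rw [Real.coe_toNNReal _ (by positivity)]; exact hwnorm z
    have e : max (T + 2 - 0) (0 - (-1)) = T + 2 := by
      rw [sub_zero, zero_sub, neg_neg]
      exact max_eq_left (by linarith)
    show ((Real.toNNReal (2 / m) : ℝ)) * max (T + 2 - 0) (0 - (-1))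
      ≤ (Real.toNNReal ((2 / m) * (T + 2)) : ℝ) - ((0 : NNReal) : ℝ)
    rw [e, Real.coe_toNNReal _ (by positivity),
      Real.coe_toNNReal _ (mul_nonneg (by positivity) (by linarith)), NNReal.coe_zero, sub_zero]
  obtain ⟨α, hα0, hαd⟩ := hpl.exists_eq_forall_mem_Icc_hasDerivWithinAt₀
  replace hα0 : α 0 = y := hα0
  have hαD : ∀ t ∈ Icc (0:ℝ) (T + 1), HasDerivAt α (w (α t)) t := by
    intro t ht
    exact (hαd t ⟨by linarith [ht.1], by linarith [ht.2]⟩).hasDerivAt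
      (Icc_mem_nhds (by linarith [ht.1]) (by linarith [ht.2]))
  have hαc : ContinuousOn α (Icc (0:ℝ) (T + 1)) :=
    fun t ht => (hαD t ht).continuousAt.continuousWithinAt
  -- ζx solves the cutoff equation
  have hwζ : ∀ t ∈ Icc (0:ℝ) T, w (ζx t) = vf (ζx t) := by
    intro t ht
    rw [hw_def]; simp only []
    rw [hχ1 _ (by rw [infDist_zero_of_mem (mem_image_of_mem ζx ht)]; positivity), one_smul]
  set Tm : ℝ := min T Ty with hTm_def
  have hTm0 : (0:ℝ) ≤ Tm := le_min hT.le hTy0'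
  have hTmT : Tm ≤ T := min_le_left _ _
  have hTmTy : Tm ≤ Ty := min_le_right _ _
  -- Gronwall estimate
  have hG : ∀ s ∈ Icc (0:ℝ) Tm, dist (ζx s) (α s) ≤ Real.exp (Lw * (T + 1)) * ‖x - y‖ := by
    have hf' : ∀ t ∈ Ico (0:ℝ) Tm, HasDerivWithinAt ζx (w (ζx t)) (Ici t) t := by
      intro t ht
      have htT : t ∈ Icc (0:ℝ) T := ⟨ht.1, le_trans ht.2.le hTmT⟩
      simp only [hwζ t htT, hvf_def]
      exact (hζx t htT).hasDerivWithinAt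
    have hg' : ∀ t ∈ Ico (0:ℝ) Tm, HasDerivWithinAt α (w (α t)) (Ici t) t := by
      intro t ht
      exact (hαD t ⟨ht.1, by linarith [ht.2.le, hTmT]⟩).hasDerivWithinAt
    have ha0 : dist (ζx 0) (α 0) ≤ ‖x - y‖ := by
      rw [hζx0, hα0, dist_eq_norm]
    have hGron := dist_le_of_trajectories_ODE (v := fun _ z => w z) (fun _ => hwlipschitz)
      (hζxc.mono (Icc_subset_Icc le_rfl hTmT)) hf'
      (hαc.mono (Icc_subset_Icc le_rfl (by linarith))) hg' ha0
    intro s hs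
    have h6 := hGron s hs
    rw [Real.coe_toNNReal _ hLw.le, sub_zero] at h6
    refine h6.trans ?_
    rw [mul_comm]
    refine mul_le_mul_of_nonneg_right (Real.exp_le_exp.mpr ?_) (norm_nonneg _)
    have h7 : s ≤ T + 1 := by linarith [hs.2, hTmT]
    exact mul_le_mul_of_nonneg_left h7 hLw.le
  -- speed bounds
  have hζxs : ∀ s t : ℝ, 0 ≤ s → s ≤ t → t ≤ T → ‖ζx t - ζx s‖ ≤ (2 / m) * (t - s) := by
    intro s t hs hst htT
    have hmem : ∀ u ∈ Icc s t, u ∈ Icc (0:ℝ) T := fun u hu => ⟨hs.trans hu.1, hu.2.trans htT⟩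
    refine norm_image_sub_le_of_norm_deriv_le_segment'
      (fun u hu => (hζx u (hmem u hu)).hasDerivWithinAt) ?_ t (right_mem_Icc.mpr hst)
    intro u hu
    have h0 : infDist (ζx u) Kc ≤ r := by
      rw [infDist_zero_of_mem (mem_image_of_mem ζx (hmem u (Ico_subset_Icc_self hu)))]
      exact hr.le
    simpa only [hvf_def] using hvnorm (ζx u) h0
  have hαs : ∀ s t : ℝ, 0 ≤ s → s ≤ t → t ≤ T + 1 → ‖α t - α s‖ ≤ (2 / m) * (t - s) := by
    intro s t hs hst htT
    have hmem : ∀ u ∈ Icc s t, u ∈ Icc (0:ℝ) (T + 1) :=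
      fun u hu => ⟨hs.trans hu.1, hu.2.trans htT⟩
    exact norm_image_sub_le_of_norm_deriv_le_segment'
      (fun u hu => (hαD u (hmem u hu)).hasDerivWithinAt)
      (fun u _ => hwnorm (α u)) t (right_mem_Icc.mpr hst)
  -- the approximate trajectory stays in the tube
  have htube : ∀ t ∈ Icc (0:ℝ) Ty, infDist (α t) Kc ≤ r / 2 := by
    intro t ht
    set s : ℝ := min t T with hs_def
    have hs0 : 0 ≤ s := le_min ht.1 hT.le
    have hst : s ≤ t := min_le_left _ _
    have hsT : s ≤ T := min_le_right _ _
    have hsTm : s ≤ Tm := le_min hsT (hst.trans ht.2)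
    have hts : t - s ≤ κ₁ * ‖x - y‖ := by
      rcases le_total t T with h | h
      · rw [hs_def, min_eq_left h]
        have : (0:ℝ) ≤ κ₁ * ‖x - y‖ := mul_nonneg κ₁pos.le (norm_nonneg _)
        linarith
      · rw [hs_def, min_eq_right h]
        have e : Ty - T = f x - f y := by rw [hTy_def, hT_def]; ring
        have h7 := neg_le_abs (f y - f x)
        have h8 := ht.2
        linarith [hfyx]
    have hd1 : dist (α t) (α s) ≤ (2 / m) * (t - s) := by
      rw [dist_eq_norm]; exact hαs s t hs0 hst (by linarith [ht.2, hTyT])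
    have hd2 : dist (α s) (ζx s) ≤ Real.exp (Lw * (T + 1)) * ‖x - y‖ := by
      rw [dist_comm]; exact hG s ⟨hs0, hsTm⟩
    have h3 : infDist (α t) Kc ≤ dist (α t) (ζx s) :=
      infDist_le_dist_of_mem (mem_image_of_mem ζx ⟨hs0, hsT⟩)
    have h4 := dist_triangle (α t) (α s) (ζx s)
    have h5 : (2 / m) * (t - s) ≤ (2 / m) * (κ₁ * ‖x - y‖) :=
      mul_le_mul_of_nonneg_left hts (by positivity)
    have h6 : infDist (α t) Kc ≤ Cd * ‖x - y‖ := by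
      calc infDist (α t) Kc ≤ dist (α t) (ζx s) := h3
        _ ≤ dist (α t) (α s) + dist (α s) (ζx s) := h4
        _ ≤ 2 / m * (κ₁ * ‖x - y‖) + Real.exp (Lw * (T + 1)) * ‖x - y‖ :=
            add_le_add (hd1.trans h5) hd2
        _ = Cd * ‖x - y‖ := by rw [hCd_def]; ring
    refine h6.trans (le_trans ?_ hδr)
    exact mul_le_mul_of_nonneg_left hy' hCd.le
  -- assemble the conclusion
  refine ⟨α, hα0, ?_, ?_, ?_⟩
  · intro t ht
    have h2 : infDist (α t) Kc ≤ r / 2 := htube t ht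
    have h3 := hαD t ⟨ht.1, by linarith [ht.2, hTyT]⟩
    have e : w (α t) = vf (α t) := by
      rw [hw_def]; simp only []; rw [hχ1 _ h2, one_smul]
    rw [e] at h3
    simpa only [hvf_def] using h3
  · intro t ht
    set φ : ℝ → ℝ := fun s => f (α s) - (f y + s) with hφ_def
    have hφd : ∀ u ∈ Ico (0:ℝ) Ty, HasDerivWithinAt φ 0 (Ici u) u := by
      intro u hu
      have huI : u ∈ Icc (0:ℝ) Ty := ⟨hu.1, hu.2.le⟩
      have h2 : infDist (α u) Kc ≤ r / 2 := htube u huI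
      have hα' := hαD u ⟨hu.1, by linarith [hu.2.le, hTyT]⟩
      have e : w (α u) = vf (α u) := by
        rw [hw_def]; simp only []; rw [hχ1 _ h2, one_smul]
      rw [e] at hα'
      have hcomp : HasDerivAt (fun s => f (α s))
          ((InnerProductSpace.toDual ℝ _ (gradient f (α u))) (vf (α u))) u :=
        (hfd _).comp_hasDerivAt u hα'
      rw [hfone _ (h2.trans (by linarith))] at hcomp
      have hlin : HasDerivAt (fun s : ℝ => f y + s) 1 u := (hasDerivAt_id u).const_add (f y)
      have h9 := hcomp.sub hlin
      simp only [sub_self] at h9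
      exact h9.hasDerivWithinAt
    have hφc : ContinuousOn φ (Icc (0:ℝ) Ty) := by
      apply ContinuousOn.sub
      · exact hdiff.continuous.comp_continuousOn
          (hαc.mono (Icc_subset_Icc le_rfl (by linarith)))
      · exact (continuous_const.add continuous_id).continuousOn
    have hcon := constant_of_has_deriv_right_zero hφc hφd t ht
    have h0 : φ 0 = 0 := by rw [hφ_def]; simp [hα0]
    rw [h0, hφ_def] at hcon
    simp only [] at hcon
    linarith [hcon]
  · have hbound : (0:ℝ) ≤ Cd * ‖x - y‖ := mul_nonneg hCd.le (norm_nonneg _)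
    apply hausdorffDist_le_of_mem_dist hbound
    · rintro p ⟨t, ht, rfl⟩
      refine ⟨α (min t Ty), mem_image_of_mem _ ⟨le_min ht.1 hTy0', min_le_right _ _⟩, ?_⟩
      set s : ℝ := min t Ty with hs_def
      have hs0 : 0 ≤ s := le_min ht.1 hTy0'
      have hst : s ≤ t := min_le_left _ _
      have hsTm : s ≤ Tm := le_min (hst.trans ht.2) (min_le_right _ _)
      have hts : t - s ≤ κ₁ * ‖x - y‖ := by
        rcases le_total t Ty with h | h
        · rw [hs_def, min_eq_left h]
          have : (0:ℝ) ≤ κ₁ * ‖x - y‖ := mul_nonneg κ₁pos.le (norm_nonneg _)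
          linarith
        · rw [hs_def, min_eq_right h]
          have e : T - Ty = f y - f x := by rw [hTy_def, hT_def]; ring
          have h7 := le_abs_self (f y - f x)
          linarith [ht.2, hfyx]
      have hd1 : dist (ζx t) (ζx s) ≤ (2 / m) * (t - s) := by
        rw [dist_eq_norm]; exact hζxs s t hs0 hst ht.2
      have hd2 : dist (ζx s) (α s) ≤ Real.exp (Lw * (T + 1)) * ‖x - y‖ := hG s ⟨hs0, hsTm⟩
      have h5 : (2 / m) * (t - s) ≤ (2 / m) * (κ₁ * ‖x - y‖) :=
        mul_le_mul_of_nonneg_left hts (by positivity)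
      calc dist (ζx t) (α s) ≤ dist (ζx t) (ζx s) + dist (ζx s) (α s) :=
            dist_triangle _ _ _
        _ ≤ 2 / m * (κ₁ * ‖x - y‖) + Real.exp (Lw * (T + 1)) * ‖x - y‖ :=
            add_le_add (hd1.trans h5) hd2
        _ = Cd * ‖x - y‖ := by rw [hCd_def]; ring
    · rintro q ⟨t, ht, rfl⟩
      refine ⟨ζx (min t T), mem_image_of_mem _ ⟨le_min ht.1 hT.le, min_le_right _ _⟩, ?_⟩
      set s : ℝ := min t T with hs_def
      have hs0 : 0 ≤ s := le_min ht.1 hT.le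
      have hst : s ≤ t := min_le_left _ _
      have hsT : s ≤ T := min_le_right _ _
      have hsTm : s ≤ Tm := le_min hsT (hst.trans ht.2)
      have hts : t - s ≤ κ₁ * ‖x - y‖ := by
        rcases le_total t T with h | h
        · rw [hs_def, min_eq_left h]
          have : (0:ℝ) ≤ κ₁ * ‖x - y‖ := mul_nonneg κ₁pos.le (norm_nonneg _)
          linarith
        · rw [hs_def, min_eq_right h]
          have e : Ty - T = f x - f y := by rw [hTy_def, hT_def]; ring
          have h7 := neg_le_abs (f y - f x)
          linarith [ht.2, hfyx]
      have hd1 : dist (α t) (α s) ≤ (2 / m) * (t - s) := by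
        rw [dist_eq_norm]; exact hαs s t hs0 hst (by linarith [ht.2, hTyT])
      have hd2 : dist (α s) (ζx s) ≤ Real.exp (Lw * (T + 1)) * ‖x - y‖ := by
        rw [dist_comm]; exact hG s ⟨hs0, hsTm⟩
      have h5 : (2 / m) * (t - s) ≤ (2 / m) * (κ₁ * ‖x - y‖) :=
        mul_le_mul_of_nonneg_left hts (by positivity)
      calc dist (α t) (ζx s) ≤ dist (α t) (α s) + dist (α s) (ζx s) :=
            dist_triangle _ _ _
        _ ≤ 2 / m * (κ₁ * ‖x - y‖) + Real.exp (Lw * (T + 1)) * ‖x - y‖ :=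
            add_le_add (hd1.trans h5) hd2
        _ = Cd * ‖x - y‖ := by rw [hCd_def]; ring
end
end
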